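/- arXiv:1502.00399 — 3 statements merged into one kernel-verified Lean document; each statement's English description precedes it below -/
import Mathlib

section
/- Let m be a probability measure on (S,ℬ) and let T be the transition operator Tμ(A) = ∫_{A×S} k(x,y) m(dx) μ(dy) with nonnegative measurable kernel k whose marginals make T a transition operator. If k(x,y) ≥ g(x) for all x,y with g ≥ 0 measurable, then the Dobrushin coefficient satisfies δ(T) ≤ 1 - ∫_S g dm. In particular if g is not a.e. zero then δ(T) < 1 and T has a unique fixed probability measure attracting all probability measures exponentially fast in total variation. -/
/-!
Write `μ₁ - μ₂ = t • (P - Q)` with `P`, `Q` probability measures, so that `‖μ₁ - μ₂‖ = 2t`.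
The images `T P`, `T Q` have the densities `∫ k x y dP(y)` and `∫ k x y dQ(y)` with respect to
`m`; both have integral `1` and both dominate `g`, so the `L¹(m)`-distance between them is at most
`2 - 2 ∫ g`. This gives `‖T μ₁ - T μ₂‖ ≤ (1 - ∫ g) ‖μ₁ - μ₂‖`. When `∫ g > 0`, the iterates of
`T` on a probability measure therefore form a Cauchy sequence of densities in the complete space
`L¹(m)`; its limit is a fixed probability measure, unique and attracting by the contraction.
-/

open MeasureTheory

variable {S : Type*} [MeasurableSpace S]

/-- Total variation norm of a finite signed measure. -/
noncomputable def tvNorm (μ : SignedMeasure S) : ℝ :=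
  (μ.totalVariation Set.univ).toReal

/-- A signed measure which is a probability measure. -/
def IsProbSM (μ : SignedMeasure S) : Prop :=
  (∀ A : Set S, MeasurableSet A → 0 ≤ μ A) ∧ μ Set.univ = 1

/-- A transition operator: a linear map on finite signed measures that maps positive
measures to positive measures isometrically (in total variation). -/
def IsTransitionOp (T : SignedMeasure S →ₗ[ℝ] SignedMeasure S) : Prop :=
  (∃ C : ℝ, ∀ μ : SignedMeasure S, tvNorm (T μ) ≤ C * tvNorm μ) ∧
  ∀ μ : SignedMeasure S, (∀ A : Set S, MeasurableSet A → 0 ≤ μ A) →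
    (∀ A : Set S, MeasurableSet A → 0 ≤ (T μ) A) ∧ tvNorm (T μ) = tvNorm μ

/-- The Dobrushin coefficient of ergodicity. -/
noncomputable def dobrushin (T : SignedMeasure S →ₗ[ℝ] SignedMeasure S) : ℝ :=
  sSup {r : ℝ | ∃ μ₁ μ₂ : SignedMeasure S, IsProbSM μ₁ ∧ IsProbSM μ₂ ∧ μ₁ ≠ μ₂ ∧
    r = tvNorm (T μ₁ - T μ₂) / tvNorm (μ₁ - μ₂)}


open Filter Topology

instance MeasureTheory.SignedMeasure.isFiniteMeasure_variation (ν : SignedMeasure S) :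
    IsFiniteMeasure ν.variation := by
  rw [← SignedMeasure.totalVariation_eq_variation, SignedMeasure.totalVariation]
  infer_instance

lemma tvNorm_eq_variation (ν : SignedMeasure S) : tvNorm ν = ν.variation.real Set.univ := by
  rw [tvNorm, SignedMeasure.totalVariation_eq_variation, measureReal_def]

lemma tvNorm_nonneg (ν : SignedMeasure S) : 0 ≤ tvNorm ν := ENNReal.toReal_nonneg

lemma tvNorm_eq_zero_iff {ν : SignedMeasure S} : tvNorm ν = 0 ↔ ν = 0 := by
  rw [tvNorm_eq_variation, measureReal_eq_zero_iff, Measure.measure_univ_eq_zero,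
    VectorMeasure.variation_eq_zero]

lemma tvNorm_add_le (ν₁ ν₂ : SignedMeasure S) : tvNorm (ν₁ + ν₂) ≤ tvNorm ν₁ + tvNorm ν₂ := by
  simp only [tvNorm_eq_variation, measureReal_def]
  rw [← ENNReal.toReal_add (measure_ne_top _ _) (measure_ne_top _ _)]
  exact ENNReal.toReal_mono (by finiteness) (VectorMeasure.variation_add_le _)

lemma tvNorm_neg (ν : SignedMeasure S) : tvNorm (-ν) = tvNorm ν := by
  rw [tvNorm_eq_variation, tvNorm_eq_variation, VectorMeasure.variation_neg]

lemma tvNorm_sub_comm (ν₁ ν₂ : SignedMeasure S) : tvNorm (ν₁ - ν₂) = tvNorm (ν₂ - ν₁) := by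
  rw [← neg_sub, tvNorm_neg]

lemma tvNorm_sub_pos {ν₁ ν₂ : SignedMeasure S} (h : ν₁ ≠ ν₂) : 0 < tvNorm (ν₁ - ν₂) :=
  (tvNorm_nonneg _).lt_of_ne' fun h0 => h (sub_eq_zero.1 (tvNorm_eq_zero_iff.1 h0))

lemma tvNorm_smul (c : ℝ) (ν : SignedMeasure S) : tvNorm (c • ν) = |c| * tvNorm ν := by
  rw [tvNorm_eq_variation, tvNorm_eq_variation, VectorMeasure.variation_smul]
  simp

lemma abs_apply_le_tvNorm (ν : SignedMeasure S) (A : Set S) : |ν A| ≤ tvNorm ν :=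
  (VectorMeasure.norm_measure_le_variation (μ := ν) (measure_ne_top _ A)).trans <| by
    rw [tvNorm_eq_variation]; exact measureReal_mono (Set.subset_univ A)

lemma tvNorm_toSignedMeasure (ρ : Measure S) [IsFiniteMeasure ρ] :
    tvNorm ρ.toSignedMeasure = ρ.real Set.univ := by
  rw [tvNorm_eq_variation, Measure.variation_toSignedMeasure]

lemma tvNorm_withDensityᵥ (m : Measure S) {f : S → ℝ} (hf : Integrable f m) :
    tvNorm (m.withDensityᵥ f) = ∫ x, |f x| ∂m := by
  rw [tvNorm_eq_variation, Measure.variation_withDensityᵥ hf, measureReal_def,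
    withDensity_apply _ MeasurableSet.univ, Measure.restrict_univ,
    ← integral_norm_eq_lintegral_enorm hf.1]
  rfl

lemma tvNorm_withDensityᵥ_sub (m : Measure S) (φ ψ : S →₁[m] ℝ) :
    tvNorm (m.withDensityᵥ φ - m.withDensityᵥ ψ) = dist φ ψ := by
  rw [← withDensityᵥ_sub (L1.integrable_coeFn φ) (L1.integrable_coeFn ψ),
    tvNorm_withDensityᵥ m ((L1.integrable_coeFn φ).sub (L1.integrable_coeFn ψ)),
    L1.dist_eq_integral_dist]
  rfl

lemma MeasureTheory.SignedMeasure.exists_eq_toSignedMeasure_of_nonneg {ν : SignedMeasure S}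
    (hν : ∀ A : Set S, MeasurableSet A → 0 ≤ ν A) :
    ∃ ρ : Measure S, ∃ _ : IsFiniteMeasure ρ, ν = ρ.toSignedMeasure := by
  have h0 : 0 ≤[Set.univ] ν := (VectorMeasure.le_restrict_univ_iff_le _ _).2 <|
    VectorMeasure.le_iff.2 fun A hA => by simpa using hν A hA
  exact ⟨_, inferInstance, (ν.toMeasureOfZeroLE_toSignedMeasure h0).symm⟩

lemma tvNorm_eq_apply_univ_of_nonneg {ν : SignedMeasure S}
    (hν : ∀ A : Set S, MeasurableSet A → 0 ≤ ν A) : tvNorm ν = ν Set.univ := by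
  obtain ⟨ρ, _, rfl⟩ := SignedMeasure.exists_eq_toSignedMeasure_of_nonneg hν
  rw [tvNorm_toSignedMeasure, Measure.toSignedMeasure_apply_measurable MeasurableSet.univ]

lemma isProbSM_toSignedMeasure (ρ : Measure S) [IsProbabilityMeasure ρ] :
    IsProbSM ρ.toSignedMeasure :=
  ⟨fun A hA => by rw [Measure.toSignedMeasure_apply_measurable hA]; exact measureReal_nonneg,
    by rw [Measure.toSignedMeasure_apply_measurable MeasurableSet.univ, probReal_univ]⟩

namespace IsProbSM

variable {μ μ₁ μ₂ : SignedMeasure S}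

lemma exists_eq_toSignedMeasure (hμ : IsProbSM μ) :
    ∃ ρ : Measure S, ∃ _ : IsProbabilityMeasure ρ, μ = ρ.toSignedMeasure := by
  obtain ⟨ρ, _, rfl⟩ := SignedMeasure.exists_eq_toSignedMeasure_of_nonneg hμ.1
  refine ⟨ρ, ⟨?_⟩, rfl⟩
  have h := hμ.2
  rw [Measure.toSignedMeasure_apply_measurable MeasurableSet.univ, measureReal_def,
    ENNReal.toReal_eq_one_iff] at h
  exact h

lemma tvNorm_eq_one (hμ : IsProbSM μ) : tvNorm μ = 1 := by
  rw [tvNorm_eq_apply_univ_of_nonneg hμ.1, hμ.2]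

lemma tvNorm_sub_le_two (h₁ : IsProbSM μ₁) (h₂ : IsProbSM μ₂) : tvNorm (μ₁ - μ₂) ≤ 2 := by
  calc tvNorm (μ₁ - μ₂) ≤ tvNorm μ₁ + tvNorm (-μ₂) := by
        rw [sub_eq_add_neg]; exact tvNorm_add_le _ _
    _ = 2 := by rw [tvNorm_neg, h₁.tvNorm_eq_one, h₂.tvNorm_eq_one]; norm_num

lemma of_tendsto_tvNorm {μ : ℕ → SignedMeasure S} {π : SignedMeasure S}
    (hμ : ∀ n, IsProbSM (μ n)) (h : Tendsto (fun n => tvNorm (π - μ n)) atTop (𝓝 0)) :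
    IsProbSM π := by
  have happly : ∀ A, Tendsto (fun n => μ n A) atTop (𝓝 (π A)) := fun A =>
    tendsto_iff_dist_tendsto_zero.2 <| squeeze_zero (fun _ => dist_nonneg)
      (fun n => by
        rw [Real.dist_eq, abs_sub_comm, ← sub_apply]
        exact abs_apply_le_tvNorm _ A) h
  exact ⟨fun A hA => ge_of_tendsto' (happly A) fun n => (hμ n).1 A hA,
    tendsto_nhds_unique (happly Set.univ) (tendsto_const_nhds.congr fun n => (hμ n).2.symm)⟩

end IsProbSM

lemma eq_of_tendsto_tvNorm {μ : ℕ → SignedMeasure S} {π₁ π₂ : SignedMeasure S}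
    (h₁ : Tendsto (fun n => tvNorm (π₁ - μ n)) atTop (𝓝 0))
    (h₂ : Tendsto (fun n => tvNorm (π₂ - μ n)) atTop (𝓝 0)) : π₁ = π₂ := by
  have hle : ∀ n, tvNorm (π₁ - π₂) ≤ tvNorm (π₁ - μ n) + tvNorm (π₂ - μ n) := fun n => by
    rw [tvNorm_sub_comm π₂, ← sub_add_sub_cancel π₁ (μ n) π₂]
    exact tvNorm_add_le _ _
  have h0 : tvNorm (π₁ - π₂) = 0 :=
    le_antisymm (ge_of_tendsto' (by simpa using h₁.add h₂) hle) (tvNorm_nonneg _)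
  exact sub_eq_zero.1 (tvNorm_eq_zero_iff.1 h0)

lemma IsTransitionOp.mapsTo {T : SignedMeasure S →ₗ[ℝ] SignedMeasure S} (hT : IsTransitionOp T) :
    Set.MapsTo T {μ | IsProbSM μ} {μ | IsProbSM μ} := fun μ hμ => by
  obtain ⟨hpos, hiso⟩ := hT.2 μ hμ.1
  exact ⟨hpos, by rw [← tvNorm_eq_apply_univ_of_nonneg hpos, hiso, hμ.tvNorm_eq_one]⟩

lemma MeasureTheory.Measure.toSignedMeasure_eq_smul_cond (p : Measure S) [IsFiniteMeasure p] :
    p.toSignedMeasure = p.real Set.univ • (ProbabilityTheory.cond p Set.univ).toSignedMeasure := by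
  ext A hA
  rw [_root_.smul_apply, Measure.toSignedMeasure_apply_measurable hA,
    Measure.toSignedMeasure_apply_measurable hA, smul_eq_mul, measureReal_def, measureReal_def,
    measureReal_def, ProbabilityTheory.cond_apply MeasurableSet.univ, Set.univ_inter,
    ENNReal.toReal_mul, ENNReal.toReal_inv]
  rcases eq_or_ne (p Set.univ).toReal 0 with h | h
  · have hA0 : (p A).toReal = 0 :=
      le_antisymm (h ▸ ENNReal.toReal_mono (measure_ne_top _ _) (measure_mono (Set.subset_univ A)))
        ENNReal.toReal_nonneg
    rw [h, hA0, zero_mul]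
  · field_simp

lemma MeasureTheory.SignedMeasure.exists_eq_smul_sub_of_apply_univ_eq_zero {ν : SignedMeasure S}
    (hν : ν Set.univ = 0) (hν0 : ν ≠ 0) :
    ∃ t : ℝ, ∃ P Q : Measure S, ∃ _ : IsProbabilityMeasure P, ∃ _ : IsProbabilityMeasure Q,
      ν = t • (P.toSignedMeasure - Q.toSignedMeasure) ∧ tvNorm ν = 2 * t := by
  set p := ν.toJordanDecomposition.posPart
  set q := ν.toJordanDecomposition.negPart
  have hν_eq : ν = p.toSignedMeasure - q.toSignedMeasure :=
    ν.toSignedMeasure_toJordanDecomposition.symm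
  have htv : tvNorm ν = p.real Set.univ + q.real Set.univ := by
    rw [tvNorm, SignedMeasure.totalVariation, Measure.add_apply,
      ENNReal.toReal_add (measure_ne_top _ _) (measure_ne_top _ _)]
    rfl
  have hpq : p.real Set.univ = q.real Set.univ := by
    rw [hν_eq, Measure.toSignedMeasure_sub_apply MeasurableSet.univ, sub_eq_zero] at hν
    exact hν
  have hp : p Set.univ ≠ 0 := fun h => hν0 <| tvNorm_eq_zero_iff.1 <| by
    rw [htv, ← hpq, measureReal_def, h, ENNReal.toReal_zero, add_zero]
  have hq : q Set.univ ≠ 0 := by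
    rwa [← measureReal_ne_zero_iff, ← hpq, measureReal_ne_zero_iff]
  have := ProbabilityTheory.cond_isProbabilityMeasure hp
  have := ProbabilityTheory.cond_isProbabilityMeasure hq
  refine ⟨p.real Set.univ, ProbabilityTheory.cond p Set.univ, ProbabilityTheory.cond q Set.univ,
    ‹_›, ‹_›, ?_, by rw [htv, hpq, two_mul]⟩
  rw [smul_sub, hν_eq]
  congr 1
  · exact p.toSignedMeasure_eq_smul_cond
  · rw [hpq]; exact q.toSignedMeasure_eq_smul_cond

lemma exists_tendsto_tvNorm_withDensityᵥ (m : Measure S) {φ : ℕ → S →₁[m] ℝ}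
    (hφ : CauchySeq φ) :
    ∃ π : SignedMeasure S, Tendsto (fun n => tvNorm (π - m.withDensityᵥ (φ n))) atTop (𝓝 0) := by
  obtain ⟨φ', hφ'⟩ := cauchySeq_tendsto_of_complete hφ
  refine ⟨m.withDensityᵥ φ', ?_⟩
  simpa only [tvNorm_withDensityᵥ_sub, dist_comm φ'] using tendsto_iff_dist_tendsto_zero.1 hφ'

def ProbLipschitzWith (c : ℝ) (T : SignedMeasure S → SignedMeasure S) : Prop :=
  ∀ μ₁ μ₂, IsProbSM μ₁ → IsProbSM μ₂ → tvNorm (T μ₁ - T μ₂) ≤ c * tvNorm (μ₁ - μ₂)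

lemma dobrushin_nonneg (T : SignedMeasure S →ₗ[ℝ] SignedMeasure S) : 0 ≤ dobrushin T :=
  Real.sSup_nonneg <| by
    rintro r ⟨μ₁, μ₂, -, -, -, rfl⟩
    exact div_nonneg (tvNorm_nonneg _) (tvNorm_nonneg _)

namespace ProbLipschitzWith

section LinearMap

variable {c : ℝ} {T : SignedMeasure S →ₗ[ℝ] SignedMeasure S}

lemma dobrushin_le (hc : 0 ≤ c) (h : ProbLipschitzWith c T) : dobrushin T ≤ c := by
  refine Real.sSup_le ?_ hc
  rintro r ⟨μ₁, μ₂, h₁, h₂, hne, rfl⟩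
  exact (div_le_iff₀ (tvNorm_sub_pos hne)).2 (h μ₁ μ₂ h₁ h₂)

lemma dobrushin (h : ProbLipschitzWith c T) : ProbLipschitzWith (dobrushin T) T := by
  intro μ₁ μ₂ h₁ h₂
  rcases eq_or_ne μ₁ μ₂ with rfl | hne
  · simp [tvNorm_eq_zero_iff.2]
  refine (div_le_iff₀ (tvNorm_sub_pos hne)).1 (le_csSup ⟨c, ?_⟩ ⟨μ₁, μ₂, h₁, h₂, hne, rfl⟩)
  rintro r ⟨ν₁, ν₂, g₁, g₂, hne', rfl⟩
  exact (div_le_iff₀ (tvNorm_sub_pos hne')).2 (h ν₁ ν₂ g₁ g₂)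

end LinearMap

variable {c : ℝ} {T : SignedMeasure S → SignedMeasure S}

lemma iterate (hT : Set.MapsTo T {μ | IsProbSM μ} {μ | IsProbSM μ}) (hc : 0 ≤ c)
    (h : ProbLipschitzWith c T) (n : ℕ) : ProbLipschitzWith (c ^ n) T^[n] := by
  induction n with
  | zero => intro μ₁ μ₂ _ _; simp
  | succ n ih =>
    intro μ₁ μ₂ h₁ h₂
    rw [Function.iterate_succ_apply', Function.iterate_succ_apply', pow_succ', mul_assoc]
    exact (h _ _ (hT.iterate n h₁) (hT.iterate n h₂)).trans
      (mul_le_mul_of_nonneg_left (ih μ₁ μ₂ h₁ h₂) hc)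

lemma eq_of_isFixedPt (h : ProbLipschitzWith c T) (hc : c < 1) {π₁ π₂ : SignedMeasure S}
    (h₁ : IsProbSM π₁) (h₂ : IsProbSM π₂) (hf₁ : Function.IsFixedPt T π₁)
    (hf₂ : Function.IsFixedPt T π₂) : π₁ = π₂ := by
  have hle := h π₁ π₂ h₁ h₂
  rw [hf₁.eq, hf₂.eq] at hle
  have h0 : tvNorm (π₁ - π₂) = 0 := by nlinarith [tvNorm_nonneg (π₁ - π₂)]
  exact sub_eq_zero.1 (tvNorm_eq_zero_iff.1 h0)

lemma tvNorm_iterate_sub_iterate_le (hT : Set.MapsTo T {μ | IsProbSM μ} {μ | IsProbSM μ})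
    (hc : 0 ≤ c) (h : ProbLipschitzWith c T) {μ₁ μ₂ : SignedMeasure S} (h₁ : IsProbSM μ₁)
    (h₂ : IsProbSM μ₂) (n : ℕ) : tvNorm (T^[n] μ₁ - T^[n] μ₂) ≤ 2 * c ^ n :=
  calc tvNorm (T^[n] μ₁ - T^[n] μ₂) ≤ c ^ n * tvNorm (μ₁ - μ₂) := h.iterate hT hc n μ₁ μ₂ h₁ h₂
    _ ≤ c ^ n * 2 := mul_le_mul_of_nonneg_left (h₁.tvNorm_sub_le_two h₂) (pow_nonneg hc n)
    _ = 2 * c ^ n := mul_comm _ _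

lemma tvNorm_sub_iterate_le (hT : Set.MapsTo T {μ | IsProbSM μ} {μ | IsProbSM μ}) (hc : 0 ≤ c)
    (h : ProbLipschitzWith c T) {π μ : SignedMeasure S} (hπ : IsProbSM π)
    (hfix : Function.IsFixedPt T π) (hμ : IsProbSM μ) (n : ℕ) :
    tvNorm (π - T^[n] μ) ≤ 2 * c ^ n := by
  rw [← (hfix.iterate n).eq]
  exact h.tvNorm_iterate_sub_iterate_le hT hc hπ hμ n

lemma exists_isFixedPt (m : Measure S) (hT : Set.MapsTo T {μ | IsProbSM μ} {μ | IsProbSM μ})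
    (hc₀ : 0 ≤ c) (hc₁ : c < 1) (h : ProbLipschitzWith c T)
    (hdens : ∀ μ, IsProbSM μ → ∃ φ : S →₁[m] ℝ, T μ = m.withDensityᵥ φ)
    {μ₀ : SignedMeasure S} (hμ₀ : IsProbSM μ₀) :
    ∃ π, IsProbSM π ∧ Function.IsFixedPt T π := by
  have hprob : ∀ n, IsProbSM (T^[n] μ₀) := fun n => hT.iterate n hμ₀
  choose φ hφ using fun n => hdens _ (hprob n)
  have hcauchy : CauchySeq φ := by
    refine cauchySeq_of_le_geometric c 2 hc₁ fun n => ?_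
    have hshift : ∀ j, T^[n] (T^[j + 1] μ₀) = T (T^[n + j] μ₀) := fun j => by
      rw [← Function.iterate_succ_apply' T, ← Function.iterate_add_apply]; rfl
    calc dist (φ n) (φ (n + 1)) = tvNorm (T^[n] (T^[1] μ₀) - T^[n] (T^[2] μ₀)) := by
          rw [← tvNorm_withDensityᵥ_sub, ← hφ, ← hφ, hshift 0, hshift 1]; rfl
      _ ≤ 2 * c ^ n := h.tvNorm_iterate_sub_iterate_le hT hc₀ (hprob 1) (hprob 2) n
  obtain ⟨π, hπ⟩ := exists_tendsto_tvNorm_withDensityᵥ m hcauchy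
  simp only [← hφ] at hπ
  have hπprob : IsProbSM π := IsProbSM.of_tendsto_tvNorm (fun n => hT (hprob n)) hπ
  have hπ' : Tendsto (fun n => tvNorm (π - T (T^[n + 1] μ₀))) atTop (𝓝 0) :=
    (tendsto_add_atTop_iff_nat 1).2 hπ
  refine ⟨π, hπprob, eq_of_tendsto_tvNorm ?_ hπ'⟩
  refine squeeze_zero (fun _ => tvNorm_nonneg _) (fun n => ?_) (by simpa using hπ.const_mul c)
  rw [← Function.iterate_succ_apply' T n]
  exact h _ _ hπprob (hprob (n + 1))

end ProbLipschitzWith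

lemma integral_abs_sub_le_of_ae_le {m : Measure S} {f₁ f₂ g : S → ℝ} (hf₁ : Integrable f₁ m)
    (hf₂ : Integrable f₂ m) (hg : Integrable g m) (h₁ : g ≤ᵐ[m] f₁) (h₂ : g ≤ᵐ[m] f₂) :
    ∫ x, |f₁ x - f₂ x| ∂m ≤ ∫ x, f₁ x ∂m + ∫ x, f₂ x ∂m - 2 * ∫ x, g x ∂m := by
  calc ∫ x, |f₁ x - f₂ x| ∂m ≤ ∫ x, (f₁ x + f₂ x - 2 * g x) ∂m := by
        refine integral_mono_ae (hf₁.sub hf₂).abs ((hf₁.add hf₂).sub (hg.const_mul 2)) ?_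
        filter_upwards [h₁, h₂] with x hx₁ hx₂
        exact abs_sub_le_iff.2 ⟨by linarith, by linarith⟩
    _ = _ := by
        rw [integral_sub (f := fun x => f₁ x + f₂ x) (hf₁.add hf₂) (hg.const_mul 2),
          integral_add hf₁ hf₂, integral_const_mul]

def HasKernel (T : SignedMeasure S →ₗ[ℝ] SignedMeasure S) (m : Measure S) (k : S → S → ℝ) :
    Prop :=
  ∀ μ : SignedMeasure S, IsProbSM μ → ∀ A : Set S, MeasurableSet A →
    (T μ) A = ∫ x in A, (∫ y, k x y ∂(μ.totalVariation)) ∂m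

namespace HasKernel

variable {T : SignedMeasure S →ₗ[ℝ] SignedMeasure S} {m : Measure S} {k : S → S → ℝ}
  {g : S → ℝ}

lemma apply_toSignedMeasure (hTk : HasKernel T m k) (ρ : Measure S) [IsProbabilityMeasure ρ]
    {A : Set S} (hA : MeasurableSet A) :
    T ρ.toSignedMeasure A = ∫ x in A, ∫ y, k x y ∂ρ ∂m := by
  rw [hTk _ (isProbSM_toSignedMeasure ρ) A hA, SignedMeasure.totalVariation_eq_variation,
    Measure.variation_toSignedMeasure]

lemma integral_eq_one (hTk : HasKernel T m k) (hT : IsTransitionOp T) (ρ : Measure S)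
    [IsProbabilityMeasure ρ] : ∫ x, ∫ y, k x y ∂ρ ∂m = 1 := by
  rw [← setIntegral_univ, ← hTk.apply_toSignedMeasure ρ MeasurableSet.univ]
  exact (hT.mapsTo (isProbSM_toSignedMeasure ρ)).2

/-- Integrability of the density comes for free: a non-integrable function has Bochner
integral `0`, not `1`. -/
lemma integrable_and_apply_eq_withDensityᵥ (hTk : HasKernel T m k) (hT : IsTransitionOp T)
    (ρ : Measure S) [IsProbabilityMeasure ρ] :
    Integrable (fun x => ∫ y, k x y ∂ρ) m ∧
      T ρ.toSignedMeasure = m.withDensityᵥ (fun x => ∫ y, k x y ∂ρ) := by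
  have hint := Integrable.of_integral_ne_zero ((hTk.integral_eq_one hT ρ).trans_ne one_ne_zero)
  refine ⟨hint, ?_⟩
  ext A hA
  rw [hTk.apply_toSignedMeasure ρ hA, withDensityᵥ_apply hint hA]

lemma lintegral_eq_one (hTk : HasKernel T m k) (hT : IsTransitionOp T)
    (hk_meas : Measurable (Function.uncurry k)) (hk_nonneg : ∀ x y, 0 ≤ k x y) (y : S) :
    ∫⁻ x, ENNReal.ofReal (k x y) ∂m = 1 := by
  have hdirac : ∀ x, ∫ y', k x y' ∂(Measure.dirac y) = k x y := fun x =>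
    integral_dirac' _ y (hk_meas.comp measurable_prodMk_left).stronglyMeasurable
  have h := hTk.integral_eq_one hT (Measure.dirac y)
  simp only [hdirac] at h
  rw [← ofReal_integral_eq_lintegral_ofReal (Integrable.of_integral_ne_zero (h ▸ one_ne_zero))
    (Eventually.of_forall fun x => hk_nonneg x y), h, ENNReal.ofReal_one]

lemma ae_integrable (hTk : HasKernel T m k) (hT : IsTransitionOp T)
    (hk_meas : Measurable (Function.uncurry k)) (hk_nonneg : ∀ x y, 0 ≤ k x y) [SFinite m]
    (ρ : Measure S) [IsProbabilityMeasure ρ] : ∀ᵐ x ∂m, Integrable (k x) ρ := by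
  have hmeas : Measurable (Function.uncurry fun x y => ENNReal.ofReal (k x y)) :=
    ENNReal.measurable_ofReal.comp hk_meas
  have hfin : ∫⁻ x, ∫⁻ y, ENNReal.ofReal (k x y) ∂ρ ∂m ≠ ⊤ := by
    rw [lintegral_lintegral_swap hmeas.aemeasurable]
    simp [hTk.lintegral_eq_one hT hk_meas hk_nonneg]
  filter_upwards [ae_lt_top hmeas.lintegral_prod_right hfin] with x hx
  refine ⟨(hk_meas.comp measurable_prodMk_left).aestronglyMeasurable, ?_⟩
  simpa [HasFiniteIntegral, Real.enorm_eq_ofReal (hk_nonneg x _)] using hx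

lemma exists_L1_density (hTk : HasKernel T m k) (hT : IsTransitionOp T) {μ : SignedMeasure S}
    (hμ : IsProbSM μ) : ∃ φ : S →₁[m] ℝ, T μ = m.withDensityᵥ φ := by
  obtain ⟨ρ, _, rfl⟩ := hμ.exists_eq_toSignedMeasure
  obtain ⟨hint, hTρ⟩ := hTk.integrable_and_apply_eq_withDensityᵥ hT ρ
  exact ⟨hint.toL1 _, hTρ.trans (WithDensityᵥEq.congr_ae hint.coeFn_toL1.symm)⟩

lemma ae_le_integral (hTk : HasKernel T m k) (hT : IsTransitionOp T)
    (hk_meas : Measurable (Function.uncurry k)) (hk_nonneg : ∀ x y, 0 ≤ k x y) [SFinite m]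
    (hminor : ∀ x y, g x ≤ k x y) (ρ : Measure S) [IsProbabilityMeasure ρ] :
    ∀ᵐ x ∂m, g x ≤ ∫ y, k x y ∂ρ := by
  filter_upwards [hTk.ae_integrable hT hk_meas hk_nonneg ρ] with x hx
  calc g x = ∫ _, g x ∂ρ := by simp
    _ ≤ ∫ y, k x y ∂ρ := integral_mono (integrable_const _) hx (hminor x)

lemma integral_le_one (hTk : HasKernel T m k) (hT : IsTransitionOp T)
    (hk_meas : Measurable (Function.uncurry k)) (hk_nonneg : ∀ x y, 0 ≤ k x y)
    [IsProbabilityMeasure m] (hg_int : Integrable g m) (hminor : ∀ x y, g x ≤ k x y) :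
    ∫ x, g x ∂m ≤ 1 :=
  (integral_mono_ae hg_int (hTk.integrable_and_apply_eq_withDensityᵥ hT m).1
    (hTk.ae_le_integral hT hk_meas hk_nonneg hminor m)).trans_eq (hTk.integral_eq_one hT m)

lemma probLipschitzWith (hTk : HasKernel T m k) (hT : IsTransitionOp T)
    (hk_meas : Measurable (Function.uncurry k)) (hk_nonneg : ∀ x y, 0 ≤ k x y) [SFinite m]
    (hg_int : Integrable g m) (hminor : ∀ x y, g x ≤ k x y) :
    ProbLipschitzWith (1 - ∫ x, g x ∂m) T := by
  intro μ₁ μ₂ h₁ h₂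
  rcases eq_or_ne (μ₁ - μ₂) 0 with h0 | h0
  · rw [← map_sub, h0, map_zero, tvNorm_eq_zero_iff.2 rfl, mul_zero]
  obtain ⟨t, P, Q, _, _, hPQ, htv⟩ := SignedMeasure.exists_eq_smul_sub_of_apply_univ_eq_zero
    (by rw [sub_apply, h₁.2, h₂.2, sub_self]) h0
  obtain ⟨hP, hTP⟩ := hTk.integrable_and_apply_eq_withDensityᵥ hT P
  obtain ⟨hQ, hTQ⟩ := hTk.integrable_and_apply_eq_withDensityᵥ hT Q
  have ht : 0 ≤ t := by linarith [tvNorm_nonneg (μ₁ - μ₂)]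
  have hdiff := integral_abs_sub_le_of_ae_le hP hQ hg_int
    (hTk.ae_le_integral hT hk_meas hk_nonneg hminor P)
    (hTk.ae_le_integral hT hk_meas hk_nonneg hminor Q)
  rw [hTk.integral_eq_one hT P, hTk.integral_eq_one hT Q] at hdiff
  calc tvNorm (T μ₁ - T μ₂) = t * ∫ x, |∫ y, k x y ∂P - ∫ y, k x y ∂Q| ∂m := by
        rw [← map_sub, hPQ, map_smul, map_sub, hTP, hTQ, ← withDensityᵥ_sub hP hQ, tvNorm_smul,
          tvNorm_withDensityᵥ m (hP.sub hQ), abs_of_nonneg ht]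
        rfl
    _ ≤ t * (1 + 1 - 2 * ∫ x, g x ∂m) := mul_le_mul_of_nonneg_left hdiff ht
    _ = (1 - ∫ x, g x ∂m) * tvNorm (μ₁ - μ₂) := by rw [htv]; ring

end HasKernel

theorem dobrushin_kernel_minorization_general
    (m : Measure S) [IsProbabilityMeasure m]
    (k : S → S → ℝ) (hk_meas : Measurable (Function.uncurry k))
    (hk_nonneg : ∀ x y, 0 ≤ k x y)
    (T : SignedMeasure S →ₗ[ℝ] SignedMeasure S)
    (hT : IsTransitionOp T)
    (hTk : ∀ μ : SignedMeasure S, IsProbSM μ → ∀ A : Set S, MeasurableSet A →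
      (T μ) A = ∫ x in A, (∫ y, k x y ∂(μ.totalVariation)) ∂m)
    (g : S → ℝ) (hg_nonneg : ∀ x, 0 ≤ g x)
    (hg_int : Integrable g m)
    (hminor : ∀ x y, g x ≤ k x y) :
    dobrushin T ≤ 1 - ∫ x, g x ∂m ∧
    (¬ (g =ᵐ[m] 0) →
      dobrushin T < 1 ∧
      ∃ π : SignedMeasure S, IsProbSM π ∧ T π = π ∧
        (∀ π' : SignedMeasure S, IsProbSM π' → T π' = π' → π' = π) ∧
        ∀ μ : SignedMeasure S, IsProbSM μ → ∀ n : ℕ, 1 ≤ n →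
          tvNorm (π - (T ^ n) μ) ≤ 2 * (dobrushin T) ^ n) := by
  have hK : HasKernel T m k := hTk
  have hα := hK.probLipschitzWith hT hk_meas hk_nonneg hg_int hminor
  have hα₀ : 0 ≤ 1 - ∫ x, g x ∂m :=
    sub_nonneg.2 (hK.integral_le_one hT hk_meas hk_nonneg hg_int hminor)
  have hδ : dobrushin T ≤ 1 - ∫ x, g x ∂m := hα.dobrushin_le hα₀
  refine ⟨hδ, fun hg0 => ?_⟩
  have hg_pos : 0 < ∫ x, g x ∂m := (integral_nonneg hg_nonneg).lt_of_ne fun h =>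
    hg0 ((integral_eq_zero_iff_of_nonneg hg_nonneg hg_int).1 h.symm)
  obtain ⟨π, hπ, hfix⟩ := hα.exists_isFixedPt m hT.mapsTo hα₀ (by linarith)
    (fun _ hμ => hK.exists_L1_density hT hμ) (isProbSM_toSignedMeasure m)
  refine ⟨hδ.trans_lt (by linarith), π, hπ, hfix,
    fun π' hπ' hfix' => hα.eq_of_isFixedPt (by linarith) hπ' hπ hfix' hfix, fun μ hμ n _ => ?_⟩
  rw [Module.End.pow_apply]
  exact hα.dobrushin.tvNorm_sub_iterate_le hT.mapsTo (dobrushin_nonneg T) hπ hfix hμ n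

theorem dobrushin_kernel_minorization
    (m : Measure S) [IsProbabilityMeasure m]
    (k : S → S → ℝ) (hk_meas : Measurable (Function.uncurry k))
    (hk_nonneg : ∀ x y, 0 ≤ k x y)
    (T : SignedMeasure S →ₗ[ℝ] SignedMeasure S)
    (hT : IsTransitionOp T)
    (hTk : ∀ μ : SignedMeasure S, IsProbSM μ → ∀ A : Set S, MeasurableSet A →
      (T μ) A = ∫ x in A, (∫ y, k x y ∂(μ.totalVariation)) ∂m)
    (g : S → ℝ) (hg_meas : Measurable g) (hg_nonneg : ∀ x, 0 ≤ g x)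
    (hg_int : Integrable g m)
    (hminor : ∀ x y, g x ≤ k x y) :
    dobrushin T ≤ 1 - ∫ x, g x ∂m ∧
    (¬ (g =ᵐ[m] 0) →
      dobrushin T < 1 ∧
      ∃ π : SignedMeasure S, IsProbSM π ∧ T π = π ∧
        (∀ π' : SignedMeasure S, IsProbSM π' → T π' = π' → π' = π) ∧
        ∀ μ : SignedMeasure S, IsProbSM μ → ∀ n : ℕ, 1 ≤ n →
          tvNorm (π - (T ^ n) μ) ≤ 2 * (dobrushin T) ^ n) :=
  dobrushin_kernel_minorization_general m k hk_meas hk_nonneg T hT hTk g hg_nonneg hg_int hminor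
end

section
/- Let Q : [0,∞) → ℝ^{n×n} be continuous, 1-periodic, probability generating (column sums zero, off-diagonal nonnegative), and suppose there exist 0 ≤ t₀ < t₁ ≤ 1 and c > 0 such that the subdiagonal entries q_{j,j-1}(t) ≥ c for all t ∈ (t₀,t₁) and j = 1,…,n (with cyclic convention q_{1,0} := q_{1,n}). Then the ODE v' = Q(t)v has a unique 1-periodic probability-vector solution π(t), and every solution starting at a probability vector converges to π with exponential rate as t → ∞. -/
open Matrix

/-!
The period map `P` of `v' = Q(t) v` is linear and preserves the probability simplex. On each of
`n` consecutive subintervals of `(t₀, t₁)` the rates `q_{j,j-1} ≥ c` push a fixed fraction of the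
mass of every state to the next state of the cycle `1 → 2 → ⋯ → n → 1`, so after one period every
probability solution is at least some `δ > 0` in every coordinate (Doeblin's condition). Writing a
zero-sum vector as `m (u - w)` with `u`, `w` probability vectors, this makes `P` contract the
`ℓ¹` norm of zero-sum vectors by the factor `1 - n δ`. A minimiser of `‖P x - x‖₁` over the
compact simplex is then a fixed point, which gives the periodic solution, and the contraction
gives its uniqueness and the exponential convergence of all probability solutions to it.
-/

open Set Function
open scoped NNReal Topology

section IntegralCurve

variable {E : Type*} [NormedAddCommGroup E] [NormedSpace ℝ E] {v : ℝ → E → E} {K : ℝ≥0}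

theorem IsIntegralCurveOn.congr_of_eqOn {γ γ' : ℝ → E} {s : Set ℝ}
    (h : IsIntegralCurveOn γ v s) (heq : EqOn γ' γ s) : IsIntegralCurveOn γ' v s :=
  fun t ht => by rw [heq ht]; exact (h t ht).congr heq (heq ht)

theorem IsIntegralCurveOn.exists_glue_Icc {γ₁ γ₂ : ℝ → E} {a b c : ℝ} (hab : a ≤ b) (hbc : b ≤ c)
    (h₁ : IsIntegralCurveOn γ₁ v (Icc a b)) (h₂ : IsIntegralCurveOn γ₂ v (Icc b c))
    (hb : γ₁ b = γ₂ b) :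
    ∃ γ, EqOn γ γ₁ (Icc a b) ∧ EqOn γ γ₂ (Icc b c) ∧ IsIntegralCurveOn γ v (Icc a c) := by
  set γ := fun t => if t ≤ b then γ₁ t else γ₂ t
  have e₁ : EqOn γ γ₁ (Icc a b) := fun t ht => if_pos ht.2
  have e₂ : EqOn γ γ₂ (Icc b c) := fun t ht => by
    rcases ht.1.eq_or_lt with rfl | hlt
    · exact (if_pos le_rfl).trans hb
    · exact if_neg (not_le.2 hlt)
  refine ⟨γ, e₁, e₂, ?_⟩
  have within : ∀ (s : Set ℝ) (t : ℝ), IsClosed s → IsIntegralCurveOn γ v s →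
      HasDerivWithinAt γ (v t (γ t)) s t := fun s t hs h => by
    by_cases hts : t ∈ s
    · exact h t hts
    · exact HasFDerivWithinAt.of_notMem_closure (by rwa [hs.closure_eq])
  rw [← Icc_union_Icc_eq_Icc hab hbc]
  exact fun t _ => (within _ t isClosed_Icc (h₁.congr_of_eqOn e₁)).union
    (within _ t isClosed_Icc (h₂.congr_of_eqOn e₂))

theorem IsIntegralCurve.eq_of_lipschitzWith (hv : ∀ t, LipschitzWith K (v t)) {f g : ℝ → E}
    (hf : IsIntegralCurve f v) (hg : IsIntegralCurve g v) {s : ℝ} (h : f s = g s) : f = g :=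
  ODE_solution_unique_univ (fun t => (hv t).lipschitzOnWith (s := univ))
    (fun t => ⟨hf t, trivial⟩) (fun t => ⟨hg t, trivial⟩) h

theorem IsIntegralCurve.comp_add_period {T : ℝ} (hv : Periodic v T) {f : ℝ → E}
    (hf : IsIntegralCurve f v) : IsIntegralCurve (fun t => f (t + T)) v := by
  have := hf.comp_add T
  rwa [show v ∘ (· + T) = v from funext hv] at this

variable [CompleteSpace E]

theorem exists_isIntegralCurveOn_Icc_add_of_lipschitzWith (hv : ∀ t, LipschitzWith K (v t))
    (hv0 : ∀ t, v t 0 = 0) (hvc : ∀ x, Continuous (v · x)) {ε : ℝ}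
    (hKε : K * ε ≤ 1 / 2) {a t₀ : ℝ} (ht₀ : t₀ ∈ Icc a (a + ε)) (x : E) :
    ∃ γ, γ t₀ = x ∧ IsIntegralCurveOn γ v (Icc a (a + ε)) := by
  have hpl : IsPicardLindelof v (⟨t₀, ht₀⟩ : Icc a (a + ε)) x (‖x‖₊ + 1) 0
      (K * (2 * ‖x‖₊ + 1)) K := by
    refine ⟨fun t _ => (hv t).lipschitzOnWith, fun y _ => (hvc y).continuousOn,
      fun t _ y hy => ?_, ?_⟩
    · have hy : ‖y‖ ≤ 2 * ‖x‖ + 1 := by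
        have := mem_closedBall_iff_norm.1 hy
        have := norm_le_insert' y x
        push_cast at *
        linarith
      calc ‖v t y‖ = dist (v t y) (v t 0) := by rw [hv0, dist_zero_right]
        _ ≤ K * dist y 0 := (hv t).dist_le_mul y 0
        _ ≤ K * (2 * ‖x‖ + 1) := by rw [dist_zero_right]; gcongr
        _ = _ := by push_cast; ring
    · have hmax : max (a + ε - t₀) (t₀ - a) ≤ ε :=
        max_le (by linarith [ht₀.1]) (by linarith [ht₀.2])
      push_cast
      calc K * (2 * ‖x‖ + 1) * max (a + ε - t₀) (t₀ - a) ≤ K * (2 * ‖x‖ + 1) * ε := by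
            gcongr
        _ = K * ε * (2 * ‖x‖ + 1) := by ring
        _ ≤ 1 / 2 * (2 * ‖x‖ + 1) := by gcongr
        _ ≤ ‖x‖ + 1 - 0 := by linarith
  exact hpl.exists_eq_forall_mem_Icc_hasDerivWithinAt₀

theorem exists_isIntegralCurveOn_Icc_of_lipschitzWith (hv : ∀ t, LipschitzWith K (v t))
    (hv0 : ∀ t, v t 0 = 0) (hvc : ∀ x, Continuous (v · x)) {a b t₀ : ℝ} (ht₀ : t₀ ∈ Icc a b)
    (x : E) : ∃ γ, γ t₀ = x ∧ IsIntegralCurveOn γ v (Icc a b) := by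
  set ε : ℝ := (2 * (K + 1))⁻¹
  have hε : 0 < ε := by positivity
  have hKε : K * ε ≤ 1 / 2 := by
    rw [← div_eq_mul_inv, div_le_iff₀ (by positivity)]
    linarith
  suffices H : ∀ m : ℕ, ∀ t₀ ∈ Icc a (a + m * ε), ∀ x : E,
      ∃ γ, γ t₀ = x ∧ IsIntegralCurveOn γ v (Icc a (a + m * ε)) by
    obtain ⟨m, hm⟩ := exists_nat_ge ((b - a) / ε)
    have hb : b ≤ a + m * ε := by rw [div_le_iff₀ hε] at hm; linarith
    obtain ⟨γ, hγ, hγv⟩ := H m t₀ ⟨ht₀.1, ht₀.2.trans hb⟩ x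
    exact ⟨γ, hγ, hγv.mono (Icc_subset_Icc_right hb)⟩
  intro m
  induction m with
  | zero =>
    intro t₀ ht₀ x
    simp only [CharP.cast_eq_zero, zero_mul, add_zero, Icc_self, mem_singleton_iff] at ht₀ ⊢
    exact ⟨fun _ => x, rfl, fun t _ => HasFDerivWithinAt.singleton⟩
  | succ m ih =>
    intro t₀ ht₀ x
    set b := a + m * ε
    have hab : a ≤ b := le_add_of_nonneg_right (by positivity)
    have hend : a + ((m + 1 : ℕ) : ℝ) * ε = b + ε := by push_cast; ring
    rw [hend] at ht₀ ⊢
    have local_at : ∀ t₀ ∈ Icc b (b + ε), ∀ y : E,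
        ∃ γ, γ t₀ = y ∧ IsIntegralCurveOn γ v (Icc b (b + ε)) :=
      fun _ h y => exists_isIntegralCurveOn_Icc_add_of_lipschitzWith hv hv0 hvc hKε h y
    rcases le_total t₀ b with htb | htb
    · obtain ⟨γ₁, hγ₁, h₁⟩ := ih t₀ ⟨ht₀.1, htb⟩ x
      obtain ⟨γ₂, hγ₂, h₂⟩ := local_at b ⟨le_rfl, by linarith⟩ (γ₁ b)
      obtain ⟨γ, e₁, -, hγ⟩ := h₁.exists_glue_Icc hab (by linarith) h₂ hγ₂.symm
      exact ⟨γ, (e₁ ⟨ht₀.1, htb⟩).trans hγ₁, hγ⟩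
    · obtain ⟨γ₂, hγ₂, h₂⟩ := local_at t₀ ⟨htb, ht₀.2⟩ x
      obtain ⟨γ₁, hγ₁, h₁⟩ := ih b ⟨hab, le_rfl⟩ (γ₂ b)
      obtain ⟨γ, -, e₂, hγ⟩ := h₁.exists_glue_Icc hab (by linarith) h₂ hγ₁
      exact ⟨γ, (e₂ ⟨htb, ht₀.2⟩).trans hγ₂, hγ⟩

theorem exists_isIntegralCurve_of_lipschitzWith (hv : ∀ t, LipschitzWith K (v t))
    (hv0 : ∀ t, v t 0 = 0) (hvc : ∀ x, Continuous (v · x)) (s : ℝ) (x : E) :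
    ∃ γ, γ s = x ∧ IsIntegralCurve γ v := by
  choose γ hγs hγ using fun m : ℕ => exists_isIntegralCurveOn_Icc_of_lipschitzWith hv hv0 hvc
    (a := s - (m + 1)) (b := s + (m + 1)) (t₀ := s) ⟨by linarith, by linarith⟩ x
  have hderiv : ∀ m : ℕ, ∀ t ∈ Ioo (s - (m + 1)) (s + (m + 1)),
      HasDerivAt (γ m) (v t (γ m t)) t := fun m t ht =>
    (hγ m t (Ioo_subset_Icc_self ht)).hasDerivAt (Icc_mem_nhds ht.1 ht.2)
  have hcons : ∀ m m' : ℕ, m ≤ m' → EqOn (γ m) (γ m') (Ioo (s - (m + 1)) (s + (m + 1))) := by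
    intro m m' hm
    have hsub : Ioo (s - (m + 1)) (s + (m + 1)) ⊆ Ioo (s - (m' + 1)) (s + (m' + 1)) := by
      have : (m : ℝ) ≤ m' := by exact_mod_cast hm
      exact Ioo_subset_Ioo (by linarith) (by linarith)
    exact ODE_solution_unique_of_mem_Ioo (fun t _ => (hv t).lipschitzOnWith (s := univ))
      ⟨by linarith, by linarith⟩ (fun t ht => ⟨hderiv m t ht, trivial⟩)
      (fun t ht => ⟨hderiv m' t (hsub ht), trivial⟩) ((hγs m).trans (hγs m').symm)
  set N : ℝ → ℕ := fun u => ⌈|u - s|⌉₊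
  have hN : ∀ u, |u - s| ≤ N u := fun u => Nat.le_ceil _
  refine ⟨fun u => γ (N u) u, hγs _, fun t => ?_⟩
  have hNt := abs_le.1 (hN t)
  have heq : (fun u => γ (N u) u) =ᶠ[𝓝 t] γ (N t + 1) := by
    filter_upwards [Ioo_mem_nhds (a := s - (N t + 1)) (b := s + (N t + 1))
      (by linarith) (by linarith)] with u hu
    have hNu := abs_le.1 (hN u)
    refine hcons (N u) (N t + 1) (Nat.ceil_le.2 ?_) ⟨by linarith, by linarith⟩
    push_cast
    exact abs_le.2 ⟨by linarith [hu.1], by linarith [hu.2]⟩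
  show HasDerivAt _ (v t (γ (N t) t)) t
  rw [heq.eq_of_nhds]
  refine (hderiv _ t ?_).congr_of_eventuallyEq heq
  push_cast
  exact ⟨by linarith, by linarith⟩

end IntegralCurve

theorem nonneg_of_hasDerivAt_of_neg {g g' : ℝ → ℝ} (hg : ∀ u, HasDerivAt g (g' u) u)
    (hneg : ∀ u, g u < 0 → 0 ≤ g' u) {a b : ℝ} (ha : 0 ≤ g a) (hab : a ≤ b) : 0 ≤ g b := by
  by_contra! hb
  -- compare `-g` with the barrier `ε (1 + (u - a))`, which `-g` can only cross where `g < 0`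
  set ε := -g b / (2 * (1 + (b - a)))
  have hε : 0 < ε := div_pos (by linarith) (by linarith)
  have hbarrier := image_le_of_deriv_right_lt_deriv_boundary' (f := fun u => -g u)
    (f' := fun u => -g' u) (B := fun u => ε * (1 + (u - a))) (B' := fun _ => ε)
    (fun u _ => (hg u).continuousAt.neg.continuousWithinAt)
    (fun u _ => (hg u).neg.hasDerivWithinAt) (by linarith [mul_one ε])
    (by fun_prop)
    (fun u _ => by
      simpa using (((hasDerivAt_id u).sub_const a).const_add 1).const_mul ε |>.hasDerivWithinAt)
    (fun u hu' hu => by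
      have : g u < 0 := by nlinarith [mul_pos hε (by linarith [hu'.1] : 0 < 1 + (u - a))]
      linarith [hneg u this])
    ⟨hab, le_rfl⟩
  have : ε * (1 + (b - a)) = -g b / 2 := by
    have : 1 + (b - a) ≠ 0 := by linarith
    simp only [ε]; field_simp
  simp only [this] at hbarrier
  linarith

theorem exists_le_exp_of_le_mul {a : ℝ → ℝ} {ρ : ℝ} (hρ : ρ ∈ Ioo 0 1) (ha : 0 ≤ a 0)
    (hanti : ∀ s t, 0 ≤ s → s ≤ t → a t ≤ a s) (hstep : ∀ k : ℕ, a (k + 1) ≤ ρ * a k) :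
    ∃ C > 0, ∃ α > 0, ∀ t ≥ (0 : ℝ), a t ≤ C * Real.exp (-α * t) := by
  have hk : ∀ k : ℕ, a k ≤ ρ ^ k * a 0 := by
    intro k
    induction k with
    | zero => simp
    | succ k ih =>
      calc a (k + 1 : ℕ) ≤ ρ * a k := by exact_mod_cast hstep k
        _ ≤ ρ * (ρ ^ k * a 0) := by gcongr; exact hρ.1.le
        _ = ρ ^ (k + 1) * a 0 := by ring
  refine ⟨(a 0 + 1) / ρ, by have := hρ.1; positivity, -Real.log ρ,
    neg_pos.2 (Real.log_neg hρ.1 hρ.2), fun t ht => ?_⟩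
  have hfloor : ρ ^ ⌊t⌋₊ ≤ ρ ^ (t - 1) := by
    rw [← Real.rpow_natCast]
    exact Real.rpow_le_rpow_of_exponent_ge hρ.1 hρ.2.le (by linarith [Nat.lt_floor_add_one t])
  calc a t ≤ a ⌊t⌋₊ := hanti _ _ (Nat.cast_nonneg _) (Nat.floor_le ht)
    _ ≤ ρ ^ ⌊t⌋₊ * (a 0 + 1) :=
        (hk _).trans (mul_le_mul_of_nonneg_left (by linarith) (pow_nonneg hρ.1.le _))
    _ ≤ ρ ^ (t - 1) * (a 0 + 1) := by gcongr
    _ = (a 0 + 1) / ρ * Real.exp (- -Real.log ρ * t) := by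
        rw [Real.rpow_sub hρ.1, Real.rpow_one, Real.rpow_def_of_pos hρ.1, neg_neg]
        ring

section Simplex

variable {ι : Type*} [Fintype ι]

theorem exists_eq_smul_sub_of_sum_eq_zero [Nonempty ι] {x : ι → ℝ} (hx : ∑ i, x i = 0) :
    ∃ m : ℝ, ∃ u ∈ stdSimplex ℝ ι, ∃ w ∈ stdSimplex ℝ ι,
      x = m • (u - w) ∧ ∑ i, |x i| = 2 * m := by
  classical
  set m := ∑ i, (x i)⁺
  have hneg : ∑ i, (x i)⁻ = m := by
    have : ∑ i, ((x i)⁺ - (x i)⁻) = 0 := by simpa only [posPart_sub_negPart] using hx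
    rw [Finset.sum_sub_distrib] at this
    linarith
  have habs : ∑ i, |x i| = 2 * m := by
    simp only [← posPart_add_negPart, Finset.sum_add_distrib, hneg]
    ring
  obtain hm | hm := (show 0 ≤ m from Finset.sum_nonneg fun i _ => posPart_nonneg (x i)).eq_or_lt
  · obtain ⟨i⟩ := ‹Nonempty ι›
    have hx0 : x = 0 := funext fun j => abs_eq_zero.1 <|
      (Finset.sum_eq_zero_iff_of_nonneg fun j _ => abs_nonneg (x j)).1
        (by rw [habs, ← hm, mul_zero]) j (Finset.mem_univ j)
    exact ⟨0, _, single_mem_stdSimplex ℝ i, _, single_mem_stdSimplex ℝ i,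
      by rw [hx0, zero_smul], by rw [habs, ← hm]⟩
  · have hmem : ∀ y : ι → ℝ, (∀ i, 0 ≤ y i) → ∑ i, y i = m → m⁻¹ • y ∈ stdSimplex ℝ ι :=
      fun y hy hsum => ⟨fun i => mul_nonneg (inv_nonneg.2 hm.le) (hy i), by
        simp only [Pi.smul_apply, smul_eq_mul, ← Finset.mul_sum, hsum]
        exact inv_mul_cancel₀ hm.ne'⟩
    refine ⟨m, _, hmem _ (fun i => posPart_nonneg (x i)) rfl,
      _, hmem _ (fun i => negPart_nonneg (x i)) hneg, funext fun i => ?_, habs⟩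
    simp only [← smul_sub, Pi.smul_apply, Pi.sub_apply, posPart_sub_negPart, smul_eq_mul]
    rw [← mul_assoc, mul_inv_cancel₀ hm.ne', one_mul]

theorem sum_abs_sub_le_of_le {p q : ι → ℝ} {δ : ℝ} (hp : ∀ i, δ ≤ p i) (hq : ∀ i, δ ≤ q i) :
    ∑ i, |p i - q i| ≤ ∑ i, p i + ∑ i, q i - 2 * Fintype.card ι * δ := by
  calc ∑ i, |p i - q i| ≤ ∑ i, ((p i - δ) + (q i - δ)) := Finset.sum_le_sum fun i _ =>
        abs_le.2 ⟨by linarith [hp i, hq i], by linarith [hp i, hq i]⟩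
    _ = _ := by simp only [Finset.sum_add_distrib, Finset.sum_sub_distrib, Finset.sum_const,
        Finset.card_univ, nsmul_eq_mul]; ring

theorem eq_of_sum_abs_sub_le_mul {x y : ι → ℝ} {ρ : ℝ} (hρ : ρ < 1)
    (h : ∑ i, |x i - y i| ≤ ρ * ∑ i, |x i - y i|) : x = y := by
  have hnonneg : 0 ≤ ∑ i, |x i - y i| := Finset.sum_nonneg fun i _ => abs_nonneg _
  have hzero : ∑ i, |x i - y i| = 0 := le_antisymm (by nlinarith) hnonneg
  refine funext fun i => sub_eq_zero.1 <| abs_eq_zero.1 ?_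
  exact (Finset.sum_eq_zero_iff_of_nonneg fun i _ => abs_nonneg _).1 hzero i (Finset.mem_univ i)

theorem exists_mem_stdSimplex_eq_of_sum_abs_le [Nonempty ι] {P : (ι → ℝ) → ι → ℝ}
    (hP : Continuous P) (hPS : MapsTo P (stdSimplex ℝ ι) (stdSimplex ℝ ι)) {ρ : ℝ} (hρ : ρ < 1)
    (hcontr : ∀ x ∈ stdSimplex ℝ ι, ∀ y ∈ stdSimplex ℝ ι,
      ∑ i, |P x i - P y i| ≤ ρ * ∑ i, |x i - y i|) :
    ∃ x ∈ stdSimplex ℝ ι, P x = x := by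
  classical
  -- a minimiser of the displacement `∑ |P x - x|` over the compact simplex is a fixed point
  set g := fun x => ∑ i, |P x i - x i|
  have hg : Continuous g := by fun_prop
  obtain ⟨i⟩ := ‹Nonempty ι›
  obtain ⟨x, hx, hmin⟩ := (isCompact_stdSimplex ℝ ι).exists_isMinOn
    ⟨_, single_mem_stdSimplex ℝ i⟩ hg.continuousOn
  exact ⟨x, hx, eq_of_sum_abs_sub_le_mul hρ <|
    (hmin (hPS hx)).trans (hcontr _ (hPS hx) _ hx)⟩

theorem exists_inv_card_le_apply_of_mem_stdSimplex [Nonempty ι] {p : ι → ℝ}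
    (hp : p ∈ stdSimplex ℝ ι) : ∃ k, (Fintype.card ι : ℝ)⁻¹ ≤ p k := by
  obtain ⟨k, -, hk⟩ := Finset.exists_le_of_sum_le (f := fun _ => (Fintype.card ι : ℝ)⁻¹)
    (g := p) Finset.univ_nonempty (by simp [hp.2, Finset.card_univ])
  exact ⟨k, hk⟩

end Simplex

section MatrixField

variable {n : ℕ} {Q : ℝ → Matrix (Fin n) (Fin n) ℝ} {K : ℝ≥0} {f : ℝ → Fin n → ℝ} {ρ : ℝ}

theorem exists_lipschitzWith_mulVec_of_periodic (hQc : Continuous Q) (hQp : Periodic Q 1) :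
    ∃ K : ℝ≥0, ∀ t, LipschitzWith K (Q t *ᵥ ·) := by
  let Φ : Matrix (Fin n) (Fin n) ℝ →ₗ[ℝ] (Fin n → ℝ) →L[ℝ] (Fin n → ℝ) :=
    LinearMap.toContinuousLinearMap.toLinearMap ∘ₗ Matrix.toLin'.toLinearMap
  have hΦ : Continuous fun t => Φ (Q t) := Φ.continuous_of_finiteDimensional.comp hQc
  obtain ⟨C, hC⟩ := isBounded_iff_forall_norm_le.1
    ((hQp.comp Φ).isBounded_of_continuous one_ne_zero hΦ)
  refine ⟨C.toNNReal, fun t => (Φ (Q t)).lipschitz.weaken ?_⟩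
  rw [← NNReal.coe_le_coe, coe_nnnorm]
  exact (hC _ (mem_range_self t)).trans (Real.le_coe_toNNReal C)

theorem abs_apply_le_of_lipschitzWith_mulVec {A : Matrix (Fin n) (Fin n) ℝ}
    (hA : LipschitzWith K (A *ᵥ ·)) (i j : Fin n) : |A i j| ≤ K := by
  calc |A i j| = ‖(A *ᵥ Pi.single j (1 : ℝ)) i‖ := by simp
    _ ≤ dist (A *ᵥ Pi.single j (1 : ℝ)) (A *ᵥ 0) := by
        rw [mulVec_zero, dist_zero_right]; exact norm_le_pi_norm _ i
    _ ≤ K * dist (Pi.single j (1 : ℝ)) (0 : Fin n → ℝ) := hA.dist_le_mul _ _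
    _ = K := by rw [dist_zero_right, Pi.norm_single, norm_one, mul_one]

theorem le_add_smul_one_apply {A : Matrix (Fin n) (Fin n) ℝ} {κ : ℝ} (hκ : 0 ≤ κ) (i j : Fin n) :
    A i j ≤ (A + κ • 1) i j := by
  rw [Matrix.add_apply, Matrix.smul_apply, one_apply, smul_eq_mul]
  split_ifs <;> linarith

theorem add_smul_one_apply_nonneg (hoff : ∀ t i j, i ≠ j → 0 ≤ Q t i j)
    (hK : ∀ t, LipschitzWith K (Q t *ᵥ ·)) (t : ℝ) (i j : Fin n) :
    0 ≤ (Q t + (K : ℝ) • 1) i j := by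
  rcases eq_or_ne i j with rfl | hij
  · simp only [Matrix.add_apply, Matrix.smul_apply, one_apply_eq, smul_eq_mul, mul_one]
    linarith [(abs_le.1 (abs_apply_le_of_lipschitzWith_mulVec (hK t) i i)).1]
  · exact (hoff t i j hij).trans (le_add_smul_one_apply K.coe_nonneg i j)

theorem sum_mulVec_eq_zero {A : Matrix (Fin n) (Fin n) ℝ} (hA : ∀ j, ∑ i, A i j = 0)
    (x : Fin n → ℝ) : ∑ i, (A *ᵥ x) i = 0 := by
  simp only [mulVec, dotProduct]
  rw [Finset.sum_comm]
  simp [← Finset.sum_mul, hA]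

theorem IsIntegralCurve.sum_apply_eq (hcol : ∀ t j, ∑ i, Q t i j = 0)
    (hf : IsIntegralCurve f (Q · *ᵥ ·)) (s t : ℝ) : ∑ i, f s i = ∑ i, f t i := by
  have hsum : ∀ u, HasDerivAt (fun u => ∑ i, f u i) 0 u := fun u => by
    have := HasDerivAt.fun_sum (u := Finset.univ) fun i _ => hasDerivAt_pi.1 (hf u) i
    rwa [sum_mulVec_eq_zero (hcol u)] at this
  exact is_const_of_deriv_eq_zero (fun u => (hsum u).differentiableAt)
    (fun u => (hsum u).deriv) s t

theorem IsIntegralCurve.mulVec_sub {g : ℝ → Fin n → ℝ} (hf : IsIntegralCurve f (Q · *ᵥ ·))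
    (hg : IsIntegralCurve g (Q · *ᵥ ·)) : IsIntegralCurve (f - g) (Q · *ᵥ ·) := fun t => by
  show HasDerivAt _ (Q t *ᵥ (f t - g t)) t
  rw [Matrix.mulVec_sub]
  exact (hf t).sub (hg t)

theorem IsIntegralCurve.mulVec_const_smul (hf : IsIntegralCurve f (Q · *ᵥ ·)) (c : ℝ) :
    IsIntegralCurve (c • f) (Q · *ᵥ ·) := fun t => by
  show HasDerivAt _ (Q t *ᵥ (c • f t)) t
  rw [Matrix.mulVec_smul]
  exact (hf t).const_smul c

theorem IsIntegralCurve.mulVec_comp_add_nat (hQp : Periodic Q 1)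
    (hf : IsIntegralCurve f (Q · *ᵥ ·)) (k : ℕ) :
    IsIntegralCurve (fun t => f (t + k)) (Q · *ᵥ ·) :=
  hf.comp_add_period fun t => by simp only [by simpa using hQp.nat_mul k t]

theorem exists_isIntegralCurve_mulVec (hK : ∀ t, LipschitzWith K (Q t *ᵥ ·))
    (hQc : Continuous Q) (s : ℝ) (x : Fin n → ℝ) :
    ∃ f, f s = x ∧ IsIntegralCurve f (Q · *ᵥ ·) :=
  exists_isIntegralCurve_of_lipschitzWith hK (fun _ => mulVec_zero _)
    (fun _ => hQc.matrix_mulVec continuous_const) s x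

theorem lipschitzWith_posPart_pi : LipschitzWith 1 (posPart : (Fin n → ℝ) → Fin n → ℝ) :=
  LipschitzWith.of_dist_le_mul fun x y => by
    rw [NNReal.coe_one, one_mul]
    refine (dist_pi_le_iff dist_nonneg).2 fun i => ?_
    simpa only [Pi.posPart_apply, NNReal.coe_one, one_mul] using
      (lipschitzWith_posPart (α := ℝ)).dist_le_mul (x i) (y i) |>.trans (by
        simpa using dist_le_pi_dist x y i)

theorem mulVec_posPart_apply_nonneg {A : Matrix (Fin n) (Fin n) ℝ}
    (hA : ∀ i j, i ≠ j → 0 ≤ A i j) {x : Fin n → ℝ} {i : Fin n} (hx : x i < 0) :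
    0 ≤ (A *ᵥ x⁺) i := by
  show 0 ≤ ∑ j, A i j * x⁺ j
  refine Finset.sum_nonneg fun j _ => ?_
  rcases eq_or_ne i j with rfl | hij
  · have : (x i)⁺ = 0 := posPart_eq_zero.2 hx.le
    simp [Pi.posPart_apply, this]
  · exact mul_nonneg (hA i j hij) (posPart_nonneg _)

theorem IsIntegralCurve.nonneg_of_le (hoff : ∀ t i j, i ≠ j → 0 ≤ Q t i j)
    (hK : ∀ t, LipschitzWith K (Q t *ᵥ ·)) (hQc : Continuous Q)
    (hf : IsIntegralCurve f (Q · *ᵥ ·)) {s t : ℝ} (hs : 0 ≤ f s) (hst : s ≤ t) : 0 ≤ f t := by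
  -- the solution `y` of the truncated system `y' = Q y⁺` cannot leave the nonnegative orthant,
  -- so it solves the original system forwards in time, and equals `f` there
  obtain ⟨y, hys, hy⟩ := exists_isIntegralCurve_of_lipschitzWith (v := fun t x => Q t *ᵥ x⁺)
    (fun t => by
      have h := (hK t).comp lipschitzWith_posPart_pi
      rw [mul_one] at h
      exact h)
    (fun t => by simp) (fun x => hQc.matrix_mulVec continuous_const) s (f s)
  have hy_nonneg : ∀ u, s ≤ u → 0 ≤ y u := fun u hu i =>
    nonneg_of_hasDerivAt_of_neg (fun w => hasDerivAt_pi.1 (hy w) i)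
      (fun w hw => mulVec_posPart_apply_nonneg (hoff w) hw) (hys ▸ hs i) hu
  have hfy : EqOn f y (Icc s t) := ODE_solution_unique hK hf.continuous.continuousOn
    (fun u _ => (hf u).hasDerivWithinAt) hy.continuous.continuousOn
    (fun u hu => by
      simpa only [posPart_eq_self.2 (hy_nonneg u hu.1)] using (hy u).hasDerivWithinAt)
    hys.symm
  rw [hfy ⟨hst, le_rfl⟩]
  exact hy_nonneg t hst

theorem IsIntegralCurve.mem_stdSimplex (hcol : ∀ t j, ∑ i, Q t i j = 0)
    (hoff : ∀ t i j, i ≠ j → 0 ≤ Q t i j) (hK : ∀ t, LipschitzWith K (Q t *ᵥ ·))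
    (hQc : Continuous Q) (hf : IsIntegralCurve f (Q · *ᵥ ·)) {s t : ℝ}
    (hs : f s ∈ stdSimplex ℝ (Fin n)) (hst : s ≤ t) : f t ∈ stdSimplex ℝ (Fin n) :=
  ⟨hf.nonneg_of_le hoff hK hQc hs.1 hst, (hf.sum_apply_eq hcol t s).trans hs.2⟩

def ContractsZeroSum (Q : ℝ → Matrix (Fin n) (Fin n) ℝ) (ρ : ℝ) : Prop :=
  ∀ f, IsIntegralCurve f (Q · *ᵥ ·) → ∑ i, f 0 i = 0 → ∑ i, |f 1 i| ≤ ρ * ∑ i, |f 0 i|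

theorem IsIntegralCurve.sum_abs_apply_nat_succ_le (hcontr : ContractsZeroSum Q ρ)
    (hQp : Periodic Q 1) (hcol : ∀ t j, ∑ i, Q t i j = 0) (hf : IsIntegralCurve f (Q · *ᵥ ·))
    (hsum : ∑ i, f 0 i = 0) (k : ℕ) : ∑ i, |f (k + 1) i| ≤ ρ * ∑ i, |f k i| := by
  simpa [add_comm] using hcontr _ (hf.mulVec_comp_add_nat hQp k)
    ((hf.sum_apply_eq hcol (0 + k) 0).trans hsum)

theorem IsIntegralCurve.eq_of_periodic (hcontr : ContractsZeroSum Q ρ) (hρ : ρ < 1)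
    (hK : ∀ t, LipschitzWith K (Q t *ᵥ ·)) {g : ℝ → Fin n → ℝ}
    (hf : IsIntegralCurve f (Q · *ᵥ ·)) (hg : IsIntegralCurve g (Q · *ᵥ ·))
    (hfp : Periodic f 1) (hgp : Periodic g 1) (hf0 : f 0 ∈ stdSimplex ℝ (Fin n))
    (hg0 : g 0 ∈ stdSimplex ℝ (Fin n)) : f = g := by
  have hle := hcontr _ (hf.mulVec_sub hg) (by simp [Finset.sum_sub_distrib, hf0.2, hg0.2])
  simp only [Pi.sub_apply, (zero_add (1 : ℝ)) ▸ hfp 0, (zero_add (1 : ℝ)) ▸ hgp 0] at hle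
  exact hf.eq_of_lipschitzWith hK hg (s := 0) (eq_of_sum_abs_sub_le_mul hρ hle)

end MatrixField

section NonnegativeField

variable {n : ℕ} {B : ℝ → Matrix (Fin n) (Fin n) ℝ} {q : ℝ → Fin n → ℝ}

theorem IsIntegralCurve.exp_mul_smul {Q : ℝ → Matrix (Fin n) (Fin n) ℝ} {p : ℝ → Fin n → ℝ}
    (hp : IsIntegralCurve p (Q · *ᵥ ·)) (κ : ℝ) :
    IsIntegralCurve (fun t => Real.exp (κ * t) • p t) (fun t x => (Q t + κ • 1) *ᵥ x) := by
  intro t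
  have hexp : HasDerivAt (fun t => Real.exp (κ * t)) (Real.exp (κ * t) * κ) t := by
    simpa using ((hasDerivAt_id t).const_mul κ).exp
  convert hexp.smul (hp t) using 1
  · rfl
  · show (Q t + κ • 1) *ᵥ (Real.exp (κ * t) • p t) = _
    rw [add_mulVec, smul_mulVec, one_mulVec, mulVec_smul, smul_smul, mul_comm κ (Real.exp _)]

theorem IsIntegralCurve.monotoneOn_apply (hB : ∀ t i j, 0 ≤ B t i j)
    (hq : IsIntegralCurve q (B · *ᵥ ·)) {r u : ℝ} (hnn : ∀ w ∈ Icc r u, 0 ≤ q w) (j : Fin n) :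
    MonotoneOn (q · j) (Icc r u) := by
  have hderiv : ∀ w, HasDerivAt (q · j) ((B w *ᵥ q w) j) w := fun w => hasDerivAt_pi.1 (hq w) j
  refine monotoneOn_of_deriv_nonneg (convex_Icc r u)
    (fun w _ => (hderiv w).continuousAt.continuousWithinAt)
    (fun w _ => (hderiv w).differentiableAt.differentiableWithinAt) fun w hw => ?_
  rw [interior_Icc] at hw
  rw [(hderiv w).deriv]
  show 0 ≤ ∑ k, B w j k * q w k
  exact Finset.sum_nonneg fun k _ => mul_nonneg (hB w j k) (hnn w (Ioo_subset_Icc_self hw) k)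

theorem IsIntegralCurve.add_mul_le_apply (hB : ∀ t i j, 0 ≤ B t i j)
    (hq : IsIntegralCurve q (B · *ᵥ ·)) {r u : ℝ} (hnn : ∀ w ∈ Icc r u, 0 ≤ q w) (hru : r ≤ u)
    {i j : Fin n} {c : ℝ} (hc : ∀ w ∈ Ioo r u, c ≤ B w j i) :
    q r j + c * (u - r) * q r i ≤ q u j := by
  have hderiv : ∀ w, HasDerivAt (q · j) ((B w *ᵥ q w) j) w := fun w => hasDerivAt_pi.1 (hq w) j
  have hr : r ∈ Icc r u := ⟨le_rfl, hru⟩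
  have key := (convex_Icc r u).mul_sub_le_image_sub_of_le_deriv (f := (q · j)) (C := c * q r i)
    (fun w _ => (hderiv w).continuousAt.continuousWithinAt)
    (fun w _ => (hderiv w).differentiableAt.differentiableWithinAt) (fun w hw => ?_)
    r hr u ⟨hru, le_rfl⟩ hru
  · linarith
  rw [interior_Icc] at hw
  rw [(hderiv w).deriv]
  have hw' := Ioo_subset_Icc_self hw
  calc c * q r i ≤ B w j i * q r i := mul_le_mul_of_nonneg_right (hc w hw) (hnn r hr i)
    _ ≤ B w j i * q w i :=
        mul_le_mul_of_nonneg_left (hq.monotoneOn_apply hB hnn i hr hw' hw.1.le) (hB w j i)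
    _ ≤ (B w *ᵥ q w) j := Finset.single_le_sum (f := fun k => B w j k * q w k)
        (fun k _ => mul_nonneg (hB w j k) (hnn w hw' k)) (Finset.mem_univ i)

open Fin.NatCast in
theorem IsIntegralCurve.pow_mul_le_apply_add_nat [NeZero n] (hB : ∀ t i j, 0 ≤ B t i j)
    (hq : IsIntegralCurve q (B · *ᵥ ·)) {r h c : ℝ} (hh : 0 ≤ h) (hc0 : 0 ≤ c)
    (hnn : ∀ w, r ≤ w → 0 ≤ q w) {m : ℕ} (hc : ∀ w ∈ Ioo r (r + m * h), ∀ j, c ≤ B w j (j - 1))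
    (k : Fin n) {i : ℕ} (hi : i ≤ m) : (c * h) ^ i * q r k ≤ q (r + i * h) (k + i) := by
  induction i with
  | zero => simp
  | succ i ih =>
    have him : (i : ℝ) + 1 ≤ m := by exact_mod_cast hi
    have hstep := hq.add_mul_le_apply hB (r := r + i * h) (u := r + (i + 1) * h)
      (fun w hw => hnn w (by nlinarith [hw.1])) (by nlinarith) (i := k + i)
      (j := k + (i + 1 : ℕ)) (c := c) (fun w hw => by
        simpa only [Nat.cast_succ, ← add_assoc, add_sub_cancel_right] using
          hc w ⟨by nlinarith [hw.1], by nlinarith [hw.2]⟩ (k + (i + 1 : ℕ)))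
    have hprev : 0 ≤ q (r + i * h) (k + (i + 1 : ℕ)) := hnn _ (by nlinarith) _
    push_cast at hstep ⊢
    calc (c * h) ^ (i + 1) * q r k = c * h * ((c * h) ^ i * q r k) := by ring
      _ ≤ c * h * q (r + i * h) (k + i) :=
          mul_le_mul_of_nonneg_left (ih (by omega)) (by positivity)
      _ ≤ q (r + (i + 1) * h) (k + (i + 1)) := by
          rw [show r + (i + 1) * h - (r + i * h) = h by ring] at hstep
          push_cast at hprev
          linarith

end NonnegativeField

section Generator

variable {n : ℕ} [NeZero n] {Q : ℝ → Matrix (Fin n) (Fin n) ℝ} {K : ℝ≥0} {f : ℝ → Fin n → ℝ}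
  {ρ : ℝ}

open Fin.NatCast in
theorem exists_pos_le_apply_one (hcol : ∀ t j, ∑ i, Q t i j = 0)
    (hoff : ∀ t i j, i ≠ j → 0 ≤ Q t i j) (hK : ∀ t, LipschitzWith K (Q t *ᵥ ·))
    (hQc : Continuous Q) {t₀ t₁ c : ℝ} (ht₀ : 0 ≤ t₀) (ht : t₀ < t₁) (ht₁ : t₁ ≤ 1)
    (hc : 0 < c) (hsub : ∀ t ∈ Ioo t₀ t₁, ∀ j : Fin n, c ≤ Q t j (j - 1)) :
    ∃ δ > 0, ∀ p, IsIntegralCurve p (Q · *ᵥ ·) → p 0 ∈ stdSimplex ℝ (Fin n) →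
      ∀ j, δ ≤ p 1 j := by
  have hn : (0 : ℝ) < n := by exact_mod_cast Nat.pos_of_neZero n
  set h := (t₁ - t₀) / n
  have hh : 0 < h := div_pos (by linarith) hn
  have hnh : t₀ + n * h = t₁ := by simp only [h]; field_simp; ring
  set γ := min (c * h) 1
  have hγ : 0 < γ := lt_min (by positivity) one_pos
  refine ⟨Real.exp (-K) * (γ ^ n / n), by positivity, fun p hp hp0 ℓ => ?_⟩
  have hpS : ∀ w, 0 ≤ w → p w ∈ stdSimplex ℝ (Fin n) := fun w hw =>
    hp.mem_stdSimplex hcol hoff hK hQc hp0 hw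
  -- `q = e^{K t} p` solves the system with the entrywise nonnegative matrix `Q + K`
  have hB := add_smul_one_apply_nonneg hoff hK
  have hq := hp.exp_mul_smul K
  set q := fun t => Real.exp (K * t) • p t
  have hqnn : ∀ w, 0 ≤ w → 0 ≤ q w := fun w hw i =>
    mul_nonneg (Real.exp_pos _).le ((hpS w hw).1 i)
  -- some state `k` carries mass `≥ 1/n` at time `t₀`; it is passed on along the cycle
  -- `k → k + 1 → ⋯` on the `n` subintervals of length `h`, then `q` only grows up to time `1`
  obtain ⟨k, hk⟩ := exists_inv_card_le_apply_of_mem_stdSimplex (hpS t₀ ht₀)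
  rw [Fintype.card_fin] at hk
  set i := (ℓ - k).val
  have hi : i ≤ n := (ℓ - k).isLt.le
  have hchain := hq.pow_mul_le_apply_add_nat hB hh.le hc.le (fun w hw => hqnn w (ht₀.trans hw))
    (fun w hw j => (hsub w ⟨hw.1, hnh ▸ hw.2⟩ j).trans (le_add_smul_one_apply K.coe_nonneg _ _))
    k hi
  rw [Fin.cast_val_eq_self, add_sub_cancel] at hchain
  have hri : t₀ + i * h ≤ 1 := by nlinarith [(Nat.cast_le (α := ℝ)).2 hi]
  have hmono := hq.monotoneOn_apply hB (r := t₀ + i * h) (u := 1)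
    (fun w hw => hqnn w (by nlinarith [hw.1])) ℓ ⟨le_rfl, hri⟩ ⟨hri, le_rfl⟩ hri
  have hqk : (n : ℝ)⁻¹ ≤ q t₀ k :=
    hk.trans (le_mul_of_one_le_left ((hpS t₀ ht₀).1 k) (Real.one_le_exp (by positivity)))
  have hγi : γ ^ n ≤ (c * h) ^ i :=
    (pow_le_pow_of_le_one hγ.le (min_le_right _ _) hi).trans
      (pow_le_pow_left₀ hγ.le (min_le_left _ _) i)
  calc Real.exp (-K) * (γ ^ n / n) = Real.exp (-K) * (γ ^ n * (n : ℝ)⁻¹) := by ring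
    _ ≤ Real.exp (-K) * ((c * h) ^ i * q t₀ k) := by gcongr
    _ ≤ Real.exp (-K) * q 1 ℓ := by gcongr; exact hchain.trans hmono
    _ = p 1 ℓ := by
        simp only [q, Pi.smul_apply, smul_eq_mul, mul_one, ← mul_assoc, ← Real.exp_add,
          neg_add_cancel, Real.exp_zero, one_mul]

theorem IsIntegralCurve.sum_abs_apply_le (hcol : ∀ t j, ∑ i, Q t i j = 0)
    (hK : ∀ t, LipschitzWith K (Q t *ᵥ ·)) (hQc : Continuous Q) {s t δ : ℝ}
    (hδ : ∀ p, IsIntegralCurve p (Q · *ᵥ ·) → p s ∈ stdSimplex ℝ (Fin n) → ∀ i, δ ≤ p t i)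
    (hf : IsIntegralCurve f (Q · *ᵥ ·)) (hsum : ∑ i, f s i = 0) :
    ∑ i, |f t i| ≤ (1 - n * δ) * ∑ i, |f s i| := by
  -- write `f = m (U - W)` with `U`, `W` probability solutions, and apply the bound to them
  obtain ⟨m, u, hu, w, hw, hfs, habs⟩ := exists_eq_smul_sub_of_sum_eq_zero hsum
  obtain ⟨U, hUs, hU⟩ := exists_isIntegralCurve_mulVec hK hQc s u
  obtain ⟨W, hWs, hW⟩ := exists_isIntegralCurve_mulVec hK hQc s w
  have hfUW : f = m • (U - W) :=
    hf.eq_of_lipschitzWith hK ((hU.mulVec_sub hW).mulVec_const_smul m) (s := s)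
      (by rw [hfs, Pi.smul_apply, Pi.sub_apply, hUs, hWs])
  have hUW := sum_abs_sub_le_of_le (hδ U hU (hUs ▸ hu)) (hδ W hW (hWs ▸ hw))
  rw [hU.sum_apply_eq hcol t s, hW.sum_apply_eq hcol t s, hUs, hWs, hu.2, hw.2,
    Fintype.card_fin] at hUW
  have hm : 0 ≤ m := by
    have : 0 ≤ ∑ i, |f s i| := Finset.sum_nonneg fun i _ => abs_nonneg _
    linarith
  calc ∑ i, |f t i| = m * ∑ i, |U t i - W t i| := by
        simp [hfUW, abs_mul, abs_of_nonneg hm, Finset.mul_sum]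
    _ ≤ m * (1 + 1 - 2 * n * δ) := by gcongr
    _ = (1 - n * δ) * ∑ i, |f s i| := by rw [habs]; ring

theorem IsIntegralCurve.sum_abs_apply_le_of_le (hcol : ∀ t j, ∑ i, Q t i j = 0)
    (hoff : ∀ t i j, i ≠ j → 0 ≤ Q t i j) (hK : ∀ t, LipschitzWith K (Q t *ᵥ ·))
    (hQc : Continuous Q) (hf : IsIntegralCurve f (Q · *ᵥ ·))
    (hsum : ∑ i, f 0 i = 0) {s t : ℝ} (hst : s ≤ t) : ∑ i, |f t i| ≤ ∑ i, |f s i| := by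
  simpa using hf.sum_abs_apply_le hcol hK hQc (δ := 0)
    (fun p hp hps => (hp.mem_stdSimplex hcol hoff hK hQc hps hst).1)
    ((hf.sum_apply_eq hcol s 0).trans hsum)

theorem exists_sum_abs_apply_one_le (hcol : ∀ t j, ∑ i, Q t i j = 0)
    (hoff : ∀ t i j, i ≠ j → 0 ≤ Q t i j) (hK : ∀ t, LipschitzWith K (Q t *ᵥ ·))
    (hQc : Continuous Q) {t₀ t₁ c : ℝ} (ht₀ : 0 ≤ t₀) (ht : t₀ < t₁) (ht₁ : t₁ ≤ 1)
    (hc : 0 < c) (hsub : ∀ t ∈ Ioo t₀ t₁, ∀ j : Fin n, c ≤ Q t j (j - 1)) :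
    ∃ ρ ∈ Ioo (0 : ℝ) 1, ContractsZeroSum Q ρ := by
  obtain ⟨δ, hδ, hdoeblin⟩ := exists_pos_le_apply_one hcol hoff hK hQc ht₀ ht ht₁ hc hsub
  have hn : (1 : ℝ) ≤ n := by exact_mod_cast Nat.one_le_iff_ne_zero.2 (NeZero.ne n)
  refine ⟨max (1 - n * δ) (1 / 2), ⟨by positivity, max_lt (by nlinarith) (by norm_num)⟩,
    fun f hf hsum => (hf.sum_abs_apply_le hcol hK hQc hdoeblin hsum).trans ?_⟩
  gcongr
  exact le_max_left _ _

theorem exists_periodic_isIntegralCurve_mem_stdSimplex (hcontr : ContractsZeroSum Q ρ)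
    (hρ : ρ < 1) (hQp : Periodic Q 1)
    (hcol : ∀ t j, ∑ i, Q t i j = 0) (hoff : ∀ t i j, i ≠ j → 0 ≤ Q t i j)
    (hK : ∀ t, LipschitzWith K (Q t *ᵥ ·)) (hQc : Continuous Q) :
    ∃ π, IsIntegralCurve π (Q · *ᵥ ·) ∧ Periodic π 1 ∧ ∀ t, π t ∈ stdSimplex ℝ (Fin n) := by
  choose sol hsol0 hsol using exists_isIntegralCurve_mulVec hK hQc 0
  have hP : LipschitzWith (Real.exp K).toNNReal fun x => sol x 1 :=
    LipschitzWith.of_dist_le_mul fun x y => by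
      have := dist_le_of_trajectories_ODE hK (hsol x).continuous.continuousOn
        (fun t _ => (hsol x t).hasDerivWithinAt) (hsol y).continuous.continuousOn
        (fun t _ => (hsol y t).hasDerivWithinAt) (by rw [hsol0, hsol0]) 1
        ⟨zero_le_one, le_rfl⟩
      rwa [sub_zero, mul_one, mul_comm, ← Real.coe_toNNReal _ (Real.exp_pos _).le] at this
  obtain ⟨x, hx, hPx⟩ := exists_mem_stdSimplex_eq_of_sum_abs_le hP.continuous
    (fun x hx => (hsol x).mem_stdSimplex hcol hoff hK hQc (by rw [hsol0]; exact hx) zero_le_one) hρ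
    (fun x hx y hy => by
      simpa [hsol0] using hcontr _ ((hsol x).mulVec_sub (hsol y)) (by simp [hsol0, hx.2, hy.2]))
  have hper : Periodic (sol x) 1 := fun t => by
    simpa using congrFun (((hsol x).mulVec_comp_add_nat hQp 1).eq_of_lipschitzWith hK (hsol x)
      (s := 0) (by simp [hsol0, hPx])) t
  refine ⟨sol x, hsol x, hper, fun t => ?_⟩
  have ht : 0 ≤ t + ⌈-t⌉₊ := by linarith [Nat.le_ceil (-t)]
  rw [← (hper.nat_mul ⌈-t⌉₊) t, mul_one]
  exact (hsol x).mem_stdSimplex hcol hoff hK hQc (by rw [hsol0]; exact hx) ht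

theorem IsIntegralCurve.exists_sum_abs_sub_le_exp (hcontr : ContractsZeroSum Q ρ)
    (hρ : ρ ∈ Ioo 0 1) (hQp : Periodic Q 1)
    (hcol : ∀ t j, ∑ i, Q t i j = 0) (hoff : ∀ t i j, i ≠ j → 0 ≤ Q t i j)
    (hK : ∀ t, LipschitzWith K (Q t *ᵥ ·)) (hQc : Continuous Q) {f g : ℝ → Fin n → ℝ}
    (hf : IsIntegralCurve f (Q · *ᵥ ·)) (hg : IsIntegralCurve g (Q · *ᵥ ·))
    (hf0 : f 0 ∈ stdSimplex ℝ (Fin n)) (hg0 : g 0 ∈ stdSimplex ℝ (Fin n)) :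
    ∃ C > 0, ∃ α > 0, ∀ t ≥ (0 : ℝ), ∑ i, |f t i - g t i| ≤ C * Real.exp (-α * t) := by
  have hfg := hf.mulVec_sub hg
  have hsum : ∑ i, (f - g) 0 i = 0 := by simp [Finset.sum_sub_distrib, hf0.2, hg0.2]
  exact exists_le_exp_of_le_mul (a := fun t => ∑ i, |(f - g) t i|) hρ
    (Finset.sum_nonneg fun i _ => abs_nonneg _)
    (fun s t _ hst => hfg.sum_abs_apply_le_of_le hcol hoff hK hQc hsum hst)
    (hfg.sum_abs_apply_nat_succ_le hcontr hQp hcol hsum)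

end Generator

theorem periodic_generator_unique_attracting_periodic_solution
    (n : ℕ) [NeZero n]
    (Q : ℝ → Matrix (Fin n) (Fin n) ℝ)
    (hQ_cont : Continuous Q)
    (hQ_per : ∀ t, Q (t + 1) = Q t)
    (hcol : ∀ t j, ∑ i, Q t i j = 0)
    (hoff : ∀ t i j, i ≠ j → 0 ≤ Q t i j)
    (t₀ t₁ : ℝ) (ht₀ : 0 ≤ t₀) (ht : t₀ < t₁) (ht₁ : t₁ ≤ 1)
    (c : ℝ) (hc : 0 < c)
    (hsub : ∀ t ∈ Set.Ioo t₀ t₁, ∀ j : Fin n, c ≤ Q t j (j - 1)) :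
    ∃ π : ℝ → Fin n → ℝ,
      (∀ t, HasDerivAt π (Q t *ᵥ π t) t) ∧
      (∀ t, π (t + 1) = π t) ∧
      (∀ t, (∀ i, 0 ≤ π t i) ∧ (∑ i, π t i) = 1) ∧
      (∀ π' : ℝ → Fin n → ℝ,
        (∀ t, HasDerivAt π' (Q t *ᵥ π' t) t) →
        (∀ t, π' (t + 1) = π' t) →
        (∀ t, (∀ i, 0 ≤ π' t i) ∧ (∑ i, π' t i) = 1) →
        π' = π) ∧
      ∀ v : ℝ → Fin n → ℝ,
        (∀ t, HasDerivAt v (Q t *ᵥ v t) t) →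
        (∀ i, 0 ≤ v 0 i) → (∑ i, v 0 i) = 1 →
        ∃ C > 0, ∃ α > 0, ∀ t ≥ (0:ℝ),
          (∑ i, |v t i - π t i|) ≤ C * Real.exp (-α * t) := by
  obtain ⟨K, hK⟩ := exists_lipschitzWith_mulVec_of_periodic hQ_cont hQ_per
  obtain ⟨ρ, hρ, hcontr⟩ :=
    exists_sum_abs_apply_one_le hcol hoff hK hQ_cont ht₀ ht ht₁ hc hsub
  obtain ⟨π, hπ, hπper, hπS⟩ :=
    exists_periodic_isIntegralCurve_mem_stdSimplex hcontr hρ.2 hQ_per hcol hoff hK hQ_cont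
  refine ⟨π, hπ, hπper, hπS, fun π' hπ' hπ'per hπ'S => ?_, fun v hv hv0 hv1 => ?_⟩
  · exact IsIntegralCurve.eq_of_periodic hcontr hρ.2 hK hπ' hπ hπ'per hπper (hπ'S 0) (hπS 0)
  · exact IsIntegralCurve.exists_sum_abs_sub_le_exp hcontr hρ hQ_per hcol hoff hK hQ_cont hv hπ
      ⟨hv0, hv1⟩ (hπS 0)
end

section
/- Let s : ℝ → ℝ be 1-periodic, nonnegative, continuous with ∫_0^1 s > 0, and let p(x,t) = s(t) e^{-∫_x^t s(u) du} for t ≥ x be the transition density of a neuron without refractory period. Define E(x) = ∫_x^∞ (t-x) p(x,t) dt. Then E is 1-periodic, satisfies E'(x) = -1 + s(x)E(x), and consequently ∫_0^1 s(x) E(x) dx = 1. -/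
/-!
Let `Q x t = exp (-∫_x^t s)` be the survival function of the hazard rate `s`, so that
`p x t = -∂ₜ Q x t`. Periodicity makes `∫_x^t s` grow linearly in `t`, hence `Q x t` decays
exponentially and integration by parts gives `E x = ∫_x^∞ Q x t dt`. Shifting `x` and `t` by a
period leaves `Q` unchanged, so `E` is periodic; writing `Q x t = e^{S x} e^{-S t}` for a primitive
`S` of `s` and differentiating gives `E' = -1 + s E`. Integrating this over a period, the left side
contributes `E 1 - E 0 = 0`, so `∫_0^1 s E = 1`.
-/

open MeasureTheory Set Filter Real Topology Asymptotics

theorem tendsto_sub_mul_of_isBigO_exp_neg {f : ℝ → ℝ} {b : ℝ} (hb : 0 < b)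
    (hf : f =O[atTop] fun t => exp (-b * t)) (a : ℝ) :
    Tendsto (fun t => (t - a) * f t) atTop (𝓝 0) := by
  have hexp : Tendsto (fun t => exp (-b * t)) atTop (𝓝 0) :=
    tendsto_exp_atBot.comp (tendsto_id.const_mul_atTop_of_neg (neg_neg_of_pos hb))
  have hlin : Tendsto (fun t => (t - a) * exp (-b * t)) atTop (𝓝 0) := by
    simpa [sub_mul] using
      (tendsto_rpow_mul_exp_neg_mul_atTop_nhds_zero 1 b hb).sub (hexp.const_mul a)
  exact ((isBigO_refl (fun t => t - a) atTop).mul hf).trans_tendsto hlin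

theorem integral_Ioi_sub_mul_neg_deriv {f f' : ℝ → ℝ} {a : ℝ}
    (hf : ∀ t, HasDerivAt f (f' t) t) (hf' : ∀ t ∈ Ioi a, f' t ≤ 0)
    (hint : IntegrableOn f (Ioi a)) (htail : Tendsto (fun t => (t - a) * f t) atTop (𝓝 0)) :
    ∫ t in Ioi a, (t - a) * -f' t = ∫ t in Ioi a, f t := by
  have hcont : Continuous f := continuous_iff_continuousAt.2 fun t => (hf t).continuousAt
  have hprim : ∀ y, HasDerivAt (fun y => (∫ t in a..y, f t) - (y - a) * f y)
      ((y - a) * -f' y) y := fun y =>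
    ((hcont.integral_hasStrictDerivAt a y).hasDerivAt.sub
      (((hasDerivAt_id' y).sub_const a).mul (hf y))).congr_deriv (by ring)
  have hlim : Tendsto (fun y => (∫ t in a..y, f t) - (y - a) * f y) atTop
      (𝓝 (∫ t in Ioi a, f t)) := by
    simpa using (intervalIntegral_tendsto_integral_Ioi a hint tendsto_id).sub htail
  simpa using integral_Ioi_of_hasDerivAt_of_nonneg' (fun y _ => hprim y)
    (fun y hy => mul_nonneg (sub_nonneg.2 hy.out.le) (neg_nonneg.2 (hf' y hy))) hlim

theorem hasDerivAt_integral_Ioi {F : Type*} [NormedAddCommGroup F] [NormedSpace ℝ F]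
    [CompleteSpace F] {f : ℝ → F} (hf : Continuous f) (hint : ∀ a, IntegrableOn f (Ioi a))
    (x : ℝ) : HasDerivAt (fun a => ∫ t in Ioi a, f t) (-f x) x := by
  have h : (fun a => ∫ t in Ioi a, f t) =
      fun a => (∫ t in Ioi 0, f t) - ∫ t in 0..a, f t := by
    funext a
    rw [← intervalIntegral.integral_Ioi_sub_Ioi' (hint 0) (hint a), sub_sub_cancel]
  rw [h]
  exact (hf.integral_hasStrictDerivAt 0 x).hasDerivAt.const_sub _

namespace Function.Periodic

variable {s : ℝ → ℝ} {T : ℝ}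

theorem exp_neg_intervalIntegral_isBigO (hper : Periodic s T) (hT : 0 < T)
    (hc : 0 < ∫ u in 0..T, s u) (x : ℝ) :
    (fun t => exp (-∫ u in x..t, s u)) =O[atTop]
      fun t => exp (-((∫ u in 0..T, s u) / T) * t) := by
  set c := ∫ u in 0..T, s u
  have hint := hper.intervalIntegrable₀ hT.ne'
    (intervalIntegral.intervalIntegrable_of_integral_ne_zero hc.ne')
  set m := sInf ((fun t => ∫ u in 0..t, s u) '' Icc 0 T)
  refine IsBigO.of_bound (exp ((∫ u in 0..x, s u) - m + c)) (Eventually.of_forall fun t => ?_)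
  have hfloor := hper.sInf_add_zsmul_le_integral_of_pos (hint 0 T) hT t
  rw [zsmul_eq_mul] at hfloor
  have hfloor' : (t / T - 1) * c ≤ ⌊t / T⌋ * c :=
    mul_le_mul_of_nonneg_right (Int.sub_one_lt_floor _).le hc.le
  have hct : c / T * t = t / T * c := by ring
  rw [← intervalIntegral.integral_interval_sub_left (hint 0 t) (hint 0 x),
    norm_of_nonneg (exp_pos _).le, norm_of_nonneg (exp_pos _).le, ← exp_add, exp_le_exp]
  linarith

theorem intervalIntegral_mul_eq_period {E : ℝ → ℝ} (hE : Periodic E T) (hs : Continuous s)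
    (hderiv : ∀ x, HasDerivAt E (-1 + s x * E x) x) : ∫ x in 0..T, s x * E x = T := by
  have hEcont : Continuous E := continuous_iff_continuousAt.2 fun x => (hderiv x).continuousAt
  have hFTC : ∫ x in 0..T, (-1 + s x * E x) = 0 := by
    rw [intervalIntegral.integral_eq_sub_of_hasDerivAt (fun x _ => hderiv x)
      ((continuous_const.add (hs.mul hEcont)).intervalIntegrable 0 T), hE.eq, sub_self]
  rw [intervalIntegral.integral_add (f := fun _ => (-1 : ℝ)) (g := fun x => s x * E x)
    intervalIntegrable_const ((hs.mul hEcont).intervalIntegrable 0 T),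
    intervalIntegral.integral_const, sub_zero, smul_eq_mul] at hFTC
  linarith

end Function.Periodic

noncomputable def survival (s : ℝ → ℝ) (x t : ℝ) : ℝ := exp (-∫ u in x..t, s u)

section Survival

variable {s : ℝ → ℝ} {T : ℝ}

theorem hasDerivAt_survival (hs : Continuous s) (x t : ℝ) :
    HasDerivAt (survival s x) (-(s t * survival s x t)) t :=
  (hs.integral_hasStrictDerivAt x t).hasDerivAt.neg.exp.congr_deriv (by simp [survival]; ring)

theorem continuous_survival (hs : Continuous s) (x : ℝ) : Continuous (survival s x) :=
  continuous_iff_continuousAt.2 fun t => (hasDerivAt_survival hs x t).continuousAt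

theorem survival_eq_exp_mul (hs : Continuous s) (x t : ℝ) :
    survival s x t = exp (∫ u in 0..x, s u) * survival s 0 t := by
  rw [survival, survival, ← exp_add, ← intervalIntegral.integral_interval_sub_left
    (hs.intervalIntegrable 0 t) (hs.intervalIntegrable 0 x)]
  ring_nf

theorem survival_add_period (hper : Function.Periodic s T) (x t : ℝ) :
    survival s (x + T) (t + T) = survival s x t := by
  simp only [survival, ← intervalIntegral.integral_comp_add_right,
    show ∀ u, s (u + T) = s u from hper]

theorem integrableOn_survival (hper : Function.Periodic s T) (hT : 0 < T)
    (hc : 0 < ∫ u in 0..T, s u) (hs : Continuous s) (x a : ℝ) :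
    IntegrableOn (survival s x) (Ioi a) :=
  integrable_of_isBigO_exp_neg (div_pos hc hT) (continuous_survival hs x).continuousOn
    (hper.exp_neg_intervalIntegral_isBigO hT hc x)

theorem integral_Ioi_sub_mul_mul_survival (hper : Function.Periodic s T) (hT : 0 < T)
    (hc : 0 < ∫ u in 0..T, s u) (hs : Continuous s) (hs₀ : ∀ t, 0 ≤ s t) (x : ℝ) :
    ∫ t in Ioi x, (t - x) * (s t * survival s x t) = ∫ t in Ioi x, survival s x t := by
  simpa using integral_Ioi_sub_mul_neg_deriv (hasDerivAt_survival hs x)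
    (fun t _ => neg_nonpos.2 (mul_nonneg (hs₀ t) (exp_pos _).le))
    (integrableOn_survival hper hT hc hs x x)
    (tendsto_sub_mul_of_isBigO_exp_neg (div_pos hc hT)
      (hper.exp_neg_intervalIntegral_isBigO hT hc x) x)

theorem periodic_integral_Ioi_survival (hper : Function.Periodic s T) :
    Function.Periodic (fun x => ∫ t in Ioi x, survival s x t) T := by
  intro x
  have h := (measurePreserving_add_right volume T).setIntegral_preimage_emb
    (measurableEmbedding_addRight T) (survival s (x + T)) (Ioi (x + T))
  rw [preimage_add_const_Ioi, add_sub_cancel_right] at h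
  simp only [← h, survival_add_period hper]

theorem hasDerivAt_integral_Ioi_survival (hper : Function.Periodic s T) (hT : 0 < T)
    (hc : 0 < ∫ u in 0..T, s u) (hs : Continuous s) (x : ℝ) :
    HasDerivAt (fun x => ∫ t in Ioi x, survival s x t)
      (-1 + s x * ∫ t in Ioi x, survival s x t) x := by
  have hsplit : (fun x => ∫ t in Ioi x, survival s x t) =
      fun x => exp (∫ u in 0..x, s u) * ∫ t in Ioi x, survival s 0 t := by
    funext y
    simp only [survival_eq_exp_mul hs y, integral_const_mul]
  rw [hsplit]
  refine ((hs.integral_hasStrictDerivAt 0 x).hasDerivAt.exp.mul (hasDerivAt_integral_Ioi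
    (continuous_survival hs 0) (integrableOn_survival hper hT hc hs 0) x)).congr_deriv ?_
  rw [congrFun hsplit x, survival, mul_neg, ← exp_add, add_neg_cancel, exp_zero]
  ring

end Survival

theorem expected_delay_periodic_memoryless
    (s : ℝ → ℝ)
    (hs_per : ∀ t, s (t + 1) = s t)
    (hs_nonneg : ∀ t, 0 ≤ s t)
    (hs_cont : Continuous s)
    (hs_pos : 0 < ∫ u in Set.Ioo (0:ℝ) 1, s u)
    (p : ℝ → ℝ → ℝ)
    (hp : ∀ x t, p x t = s t * Real.exp (-(∫ u in x..t, s u)))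
    (E : ℝ → ℝ)
    (hE : ∀ x, E x = ∫ t in Set.Ioi x, (t - x) * p x t) :
    (∀ x, E (x + 1) = E x) ∧
    (∀ x, HasDerivAt E (-1 + s x * E x) x) ∧
    (∫ x in Set.Ioo (0:ℝ) 1, s x * E x) = 1 := by
  have hc : 0 < ∫ u in (0:ℝ)..1, s u := by
    rwa [intervalIntegral.integral_of_le zero_le_one, integral_Ioc_eq_integral_Ioo]
  have hE_survival : E = fun x => ∫ t in Ioi x, survival s x t := by
    funext x
    rw [hE, ← integral_Ioi_sub_mul_mul_survival hs_per one_pos hc hs_cont hs_nonneg x]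
    simp only [hp, survival]
  have hE_per : Function.Periodic E 1 := hE_survival ▸ periodic_integral_Ioi_survival hs_per
  have hE_deriv : ∀ x, HasDerivAt E (-1 + s x * E x) x :=
    hE_survival ▸ hasDerivAt_integral_Ioi_survival hs_per one_pos hc hs_cont
  refine ⟨hE_per, hE_deriv, ?_⟩
  rw [← integral_Ioc_eq_integral_Ioo, ← intervalIntegral.integral_of_le zero_le_one]
  exact hE_per.intervalIntegral_mul_eq_period hs_cont hE_deriv
end
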